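/- arXiv:1409.5928 — 5 statements merged into one kernel-verified Lean document; each statement's English description precedes it below -/
import Mathlib

section
/- If a : ℝ → ℝ is measurable and integrable with respect to the probability measure dF, then ∫_ℝ a(x) dF(x) = ∫_0^1 a(F^{-1}(t)) dt, where F^{-1} is the generalized inverse of the distribution function F. -/
open MeasureTheory Set Filter Topology
open scoped ENNReal

/-- Generalized inverse (quantile function) of a distribution function. -/
noncomputable def genInv (F : ℝ → ℝ) (u : ℝ) : ℝ := sInf {x : ℝ | u ≤ F x}

lemma Fmono (μ : Measure ℝ) (F : ℝ → ℝ) (hF : ∀ x, F x = (μ (Iic x)).toReal)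
    [IsFiniteMeasure μ] : Monotone F := fun x y hxy => by
  rw [hF, hF]
  exact ENNReal.toReal_mono (measure_ne_top μ _) (measure_mono (Iic_subset_Iic.2 hxy))

lemma S_ne (μ : Measure ℝ) [IsProbabilityMeasure μ] (F : ℝ → ℝ)
    (hF : ∀ x, F x = (μ (Iic x)).toReal) {t : ℝ} (ht : t < 1) :
    {x : ℝ | t ≤ F x}.Nonempty := by
  have h1 : ENNReal.ofReal t < μ univ := by
    rw [measure_univ]; exact ENNReal.ofReal_lt_one.2 ht
  have := (tendsto_measure_Iic_atTop μ).eventually (eventually_gt_nhds h1)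
  obtain ⟨x, hx⟩ := this.exists
  refine ⟨x, ?_⟩
  rw [Set.mem_setOf_eq, hF]
  rcases le_or_gt t 0 with h | h
  · exact h.trans ENNReal.toReal_nonneg
  · have := ENNReal.toReal_mono (measure_ne_top μ _) hx.le
    rwa [ENNReal.toReal_ofReal h.le] at this

lemma S_bdd (μ : Measure ℝ) [IsProbabilityMeasure μ] (F : ℝ → ℝ)
    (hF : ∀ x, F x = (μ (Iic x)).toReal) {t : ℝ} (ht : 0 < t) :
    BddBelow {x : ℝ | t ≤ F x} := by
  by_contra hb
  rw [not_bddBelow_iff] at hb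
  have hall : ∀ x : ℝ, t ≤ F x := by
    intro x
    obtain ⟨y, hy, hyx⟩ := hb x
    exact le_trans hy (Fmono μ F hF hyx.le)
  have hto : Tendsto (fun n : ℕ => μ (Iic (-(n:ℝ)))) atTop
      (𝓝 (μ (⋂ n : ℕ, Iic (-(n:ℝ))))) := by
    refine tendsto_measure_iInter_atTop (fun n => measurableSet_Iic.nullMeasurableSet)
      (fun m n hmn => Iic_subset_Iic.2 ?_) ⟨0, measure_ne_top μ _⟩
    have : (m:ℝ) ≤ (n:ℝ) := Nat.cast_le.2 hmn
    linarith
  have hempty : (⋂ n : ℕ, Iic (-(n:ℝ))) = ∅ := by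
    ext x
    simp only [mem_iInter, mem_Iic, mem_empty_iff_false, iff_false, not_forall, not_le]
    obtain ⟨n, hn⟩ := exists_nat_gt (-x)
    exact ⟨n, by linarith⟩
  rw [hempty, measure_empty] at hto
  have hle : ENNReal.ofReal t ≤ (0 : ℝ≥0∞) := by
    refine ge_of_tendsto hto (Eventually.of_forall fun n => ?_)
    have h := hall (-(n:ℝ))
    rw [hF] at h
    rw [← ENNReal.ofReal_toReal (measure_ne_top μ (Iic (-(n:ℝ))))]
    exact ENNReal.ofReal_le_ofReal h
  exact absurd hle (not_le.2 (ENNReal.ofReal_pos.2 ht))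

lemma S_mem (μ : Measure ℝ) [IsProbabilityMeasure μ] (F : ℝ → ℝ)
    (hF : ∀ x, F x = (μ (Iic x)).toReal) {t : ℝ} (ht0 : 0 < t) (ht1 : t < 1) :
    t ≤ F (genInv F t) := by
  have hne := S_ne μ F hF ht1
  set c : ℝ := sInf {x : ℝ | t ≤ F x} with hc
  have hmemn : ∀ n : ℕ, t ≤ F (c + 1 / (n + 1)) := by
    intro n
    have hlt : c < c + 1 / (n + 1) := by
      have : (0:ℝ) < 1 / (n + 1) := by positivity
      linarith
    obtain ⟨y, hy, hyx⟩ := exists_lt_of_csInf_lt hne hlt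
    exact le_trans hy (Fmono μ F hF hyx.le)
  have hto : Tendsto (fun n : ℕ => μ (Iic (c + 1 / (n + 1)))) atTop
      (𝓝 (μ (⋂ n : ℕ, Iic (c + 1 / (n + 1))))) := by
    refine tendsto_measure_iInter_atTop (fun n => measurableSet_Iic.nullMeasurableSet)
      (fun m n hmn => Iic_subset_Iic.2 ?_) ⟨0, measure_ne_top μ _⟩
    have h1 : (1:ℝ) / (n + 1) ≤ 1 / (m + 1) := by
      apply one_div_le_one_div_of_le (by positivity)
      have : (m:ℝ) ≤ (n:ℝ) := Nat.cast_le.2 hmn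
      linarith
    linarith
  have hiInter : (⋂ n : ℕ, Iic (c + 1 / (n + 1))) = Iic c := by
    ext x
    simp only [mem_iInter, mem_Iic]
    constructor
    · intro h
      refine le_of_forall_pos_le_add fun ε hε => ?_
      obtain ⟨n, hn⟩ := exists_nat_one_div_lt hε
      have h' := h n
      push_cast at h' hn ⊢
      linarith
    · intro h n
      have : (0:ℝ) < 1 / (n + 1) := by positivity
      linarith
  rw [hiInter] at hto
  have hle : ENNReal.ofReal t ≤ μ (Iic c) := by
    refine ge_of_tendsto hto (Eventually.of_forall fun n => ?_)
    have h := hmemn n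
    rw [hF] at h
    rw [← ENNReal.ofReal_toReal (measure_ne_top μ (Iic (c + 1 / (n + 1))))]
    exact ENNReal.ofReal_le_ofReal h
  have hfin : t ≤ (μ (Iic c)).toReal := by
    have := ENNReal.toReal_mono (measure_ne_top μ _) hle
    rwa [ENNReal.toReal_ofReal ht0.le] at this
  show t ≤ F (sInf {x : ℝ | t ≤ F x})
  rw [← hc, hF]
  exact hfin

lemma genInv_le_iff (μ : Measure ℝ) [IsProbabilityMeasure μ] (F : ℝ → ℝ)
    (hF : ∀ x, F x = (μ (Iic x)).toReal) {t x : ℝ} (ht0 : 0 < t) (ht1 : t < 1) :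
    genInv F t ≤ x ↔ t ≤ F x := by
  constructor
  · intro h
    exact (S_mem μ F hF ht0 ht1).trans (Fmono μ F hF h)
  · intro h
    exact csInf_le (S_bdd μ F hF ht0) h

/-- If `a : ℝ → ℝ` is measurable and integrable with respect to the probability
measure `μ` with cdf `F`, then `∫ a dμ = ∫_{(0,1)} a (F⁻¹ t) dt`. -/
theorem integral_eq_integral_comp_quantile
    (μ : Measure ℝ) [IsProbabilityMeasure μ]
    (F : ℝ → ℝ) (hF : ∀ x, F x = (μ (Iic x)).toReal)
    (a : ℝ → ℝ) (ha : Measurable a) (hint : Integrable a μ) :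
    ∫ x, a x ∂μ = ∫ t in Ioo (0:ℝ) 1, a (genInv F t) := by
  set P := volume.restrict (Ioo (0:ℝ) 1) with hP
  have hg : AEMeasurable (genInv F) P := by
    refine aemeasurable_restrict_of_monotoneOn measurableSet_Ioo ?_
    intro s hs u hu hsu
    exact csInf_le_csInf (S_bdd μ F hF hs.1) (S_ne μ F hF hu.2)
      (fun x hx => hx.trans' hsu)
  have hF01 : ∀ x, 0 ≤ F x ∧ F x ≤ 1 := by
    intro x
    rw [hF]
    refine ⟨ENNReal.toReal_nonneg, ?_⟩
    have := ENNReal.toReal_mono (measure_ne_top μ univ) (measure_mono (subset_univ (Iic x)))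
    simpa using this
  have hmap : Measure.map (genInv F) P = μ := by
    have hfin : IsFiniteMeasure (Measure.map (genInv F) P) := by
      constructor
      rw [Measure.map_apply_of_aemeasurable hg MeasurableSet.univ]
      simp [hP]
    refine @Measure.ext_of_Iic ℝ _ _ _ _ _ _ _ _ hfin (fun x => ?_)
    rw [Measure.map_apply_of_aemeasurable hg measurableSet_Iic, hP,
      Measure.restrict_apply' measurableSet_Ioo]
    have hset : genInv F ⁻¹' Iic x ∩ Ioo 0 1 = Iic (F x) ∩ Ioo 0 1 := by
      ext t
      simp only [mem_inter_iff, mem_preimage, mem_Iic, mem_Ioo, and_congr_left_iff]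
      intro ht
      exact genInv_le_iff μ F hF ht.1 ht.2
    rw [hset]
    have hFx := hF01 x
    rcases lt_or_eq_of_le hFx.2 with h1 | h1
    · have heq : Iic (F x) ∩ Ioo (0:ℝ) 1 = Ioc 0 (F x) := by
        ext t
        simp only [mem_inter_iff, mem_Iic, mem_Ioo, mem_Ioc]
        constructor
        · rintro ⟨h, h2, _⟩; exact ⟨h2, h⟩
        · rintro ⟨h2, h⟩; exact ⟨h, h2, h.trans_lt h1⟩
      rw [heq, Real.volume_Ioc, sub_zero, hF, ENNReal.ofReal_toReal (measure_ne_top μ _)]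
    · have heq : Iic (F x) ∩ Ioo (0:ℝ) 1 = Ioo 0 1 := by
        rw [inter_eq_right]
        intro t ht
        simp only [mem_Iic, h1]
        exact ht.2.le
      have hx1 : μ (Iic x) = 1 := by
        rw [← ENNReal.toReal_eq_one_iff, ← hF, h1]
      rw [heq, Real.volume_Ioo, sub_zero, ENNReal.ofReal_one, hx1]
  calc ∫ x, a x ∂μ = ∫ x, a x ∂(Measure.map (genInv F) P) := by rw [hmap]
    _ = ∫ t, a (genInv F t) ∂P :=
        integral_map hg (by rw [hmap]; exact ha.aestronglyMeasurable)
    _ = ∫ t in Ioo (0:ℝ) 1, a (genInv F t) := rfl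
end

section
/- The shifted Legendre polynomial L_r(t) = Σ_{k=0}^r (-1)^k C(r,k)^2 t^{r-k}(1-t)^k equals Σ_{k=0}^r (-1)^{r-k} C(r,k) C(r+k,k) t^k for all t ∈ ℝ. -/
open Finset

/-- Vandermonde-type identity: `C(r+k, k) = ∑_{j=0}^{r} C(r,j) C(k,j)`. -/
lemma aux_vandermonde (r k : ℕ) :
    (r + k).choose k = ∑ j ∈ Finset.range (r + 1), r.choose j * k.choose j := by
  rw [Nat.add_choose_eq, Finset.Nat.sum_antidiagonal_eq_sum_range_succ_mk]
  have h1 : ∑ a ∈ range (k + 1), r.choose a * k.choose (k - a)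
      = ∑ a ∈ range (k + 1), r.choose a * k.choose a := by
    refine Finset.sum_congr rfl fun a ha => ?_
    rw [Nat.choose_symm (by simpa using Nat.lt_succ_iff.mp (Finset.mem_range.mp ha))]
  rw [h1]
  have h2 : ∑ a ∈ range (k + 1), r.choose a * k.choose a
      = ∑ a ∈ range (max r k + 1), r.choose a * k.choose a := by
    refine Finset.sum_subset (Finset.range_subset_range.mpr (by omega)) fun a _ ha => ?_
    rw [Nat.choose_eq_zero_of_lt (show k < a by simpa using ha), Nat.mul_zero]
  have h3 : ∑ a ∈ range (r + 1), r.choose a * k.choose a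
      = ∑ a ∈ range (max r k + 1), r.choose a * k.choose a := by
    refine Finset.sum_subset (Finset.range_subset_range.mpr (by omega)) fun a _ ha => ?_
    rw [Nat.choose_eq_zero_of_lt (show r < a by simpa using ha), Nat.zero_mul]
  rw [h2, ← h3]

lemma aux_key (r : ℕ) (t : ℝ) :
    ∑ k ∈ Finset.range (r + 1),
        (-1 : ℝ) ^ (r - k) * (Nat.choose r k : ℝ) * (Nat.choose (r + k) k : ℝ) * t ^ k
      = ∑ j ∈ Finset.range (r + 1),
        (Nat.choose r j : ℝ) ^ 2 * t ^ j * (t - 1) ^ (r - j) := by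
  calc
    ∑ k ∈ range (r + 1), (-1 : ℝ) ^ (r - k) * r.choose k * (r + k).choose k * t ^ k
      = ∑ k ∈ range (r + 1), ∑ j ∈ range (r + 1),
          (-1 : ℝ) ^ (r - k) * r.choose k * (r.choose j * k.choose j) * t ^ k := by
        refine Finset.sum_congr rfl fun k _ => ?_
        have hv : ((r + k).choose k : ℝ)
            = ∑ j ∈ range (r + 1), (r.choose j : ℝ) * (k.choose j : ℝ) := by
          exact_mod_cast congrArg (Nat.cast : ℕ → ℝ) (aux_vandermonde r k)
        rw [hv, Finset.mul_sum, Finset.sum_mul]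
    _ = ∑ j ∈ range (r + 1), ∑ k ∈ range (r + 1),
          (-1 : ℝ) ^ (r - k) * r.choose k * (r.choose j * k.choose j) * t ^ k :=
        Finset.sum_comm
    _ = ∑ j ∈ range (r + 1), ∑ k ∈ Finset.Ico j (r + 1),
          (-1 : ℝ) ^ (r - k) * r.choose k * (r.choose j * k.choose j) * t ^ k := by
        refine Finset.sum_congr rfl fun j hj => ?_
        symm
        refine Finset.sum_subset (fun k hk => ?_) (fun k hk hk' => ?_)
        · simp only [Finset.mem_Ico] at hk; exact Finset.mem_range.mpr hk.2
        · have : k < j := by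
            simp only [Finset.mem_Ico, Finset.mem_range] at hk hk'
            omega
          rw [Nat.choose_eq_zero_of_lt this]
          push_cast
          ring
    _ = ∑ j ∈ range (r + 1),
          (r.choose j : ℝ) ^ 2 * t ^ j * (t - 1) ^ (r - j) := by
        refine Finset.sum_congr rfl fun j hj => ?_
        have hjr : j ≤ r := Nat.lt_succ_iff.mp (Finset.mem_range.mp hj)
        rw [Finset.sum_Ico_eq_sum_range]
        have hcard : r + 1 - j = (r - j) + 1 := by omega
        rw [hcard]
        have hstep : ∀ i ∈ range ((r - j) + 1),
            (-1 : ℝ) ^ (r - (j + i)) * r.choose (j + i) * (r.choose j * (j + i).choose j)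
                * t ^ (j + i)
            = ((r.choose j : ℝ) ^ 2 * t ^ j) * (t ^ i * (-1 : ℝ) ^ (r - j - i)
                * ((r - j).choose i : ℝ)) := by
          intro i hi
          have hir : i ≤ r - j := Nat.lt_succ_iff.mp (Finset.mem_range.mp hi)
          have hle : j + i ≤ r := by omega
          have hmul : r.choose (j + i) * (j + i).choose j
              = r.choose j * (r - j).choose i := by
            have := Nat.choose_mul (n := r) (k := j + i) (s := j) (by omega)
            simpa [Nat.add_sub_cancel_left] using this
          have hcast : (r.choose (j + i) : ℝ) * ((j + i).choose j : ℝ)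
              = (r.choose j : ℝ) * ((r - j).choose i : ℝ) := by
            exact_mod_cast congrArg (Nat.cast : ℕ → ℝ) hmul
          have hexp : r - (j + i) = r - j - i := by omega
          rw [hexp, pow_add]
          calc (-1 : ℝ) ^ (r - j - i) * r.choose (j + i) * (r.choose j * (j + i).choose j)
                * (t ^ j * t ^ i)
              = ((r.choose (j + i) : ℝ) * ((j + i).choose j : ℝ)) * ((r.choose j : ℝ)
                * ((-1 : ℝ) ^ (r - j - i) * (t ^ j * t ^ i))) := by ring
            _ = ((r.choose j : ℝ) * ((r - j).choose i : ℝ)) * ((r.choose j : ℝ)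
                * ((-1 : ℝ) ^ (r - j - i) * (t ^ j * t ^ i))) := by rw [hcast]
            _ = (r.choose j : ℝ) ^ 2 * t ^ j * (t ^ i * (-1 : ℝ) ^ (r - j - i)
                * ((r - j).choose i : ℝ)) := by ring
        rw [Finset.sum_congr rfl hstep, ← Finset.mul_sum]
        congr 1
        have := add_pow t (-1 : ℝ) (r - j)
        simpa [sub_eq_add_neg] using this.symm

/-- The two standard expressions for the shifted Legendre polynomial of order `r` agree:
`∑_{k=0}^r (-1)^k C(r,k)² t^{r-k} (1-t)^k = ∑_{k=0}^r (-1)^{r-k} C(r,k) C(r+k,k) t^k`. -/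
theorem shiftedLegendre_expansions (r : ℕ) (t : ℝ) :
    ∑ k ∈ Finset.range (r + 1),
        (-1 : ℝ) ^ k * (Nat.choose r k : ℝ) ^ 2 * t ^ (r - k) * (1 - t) ^ k
      = ∑ k ∈ Finset.range (r + 1),
        (-1 : ℝ) ^ (r - k) * (Nat.choose r k : ℝ) * (Nat.choose (r + k) k : ℝ) * t ^ k := by
  rw [aux_key]
  rw [← Finset.sum_range_reflect]
  refine Finset.sum_congr rfl fun j hj => ?_
  have hjr : j ≤ r := Nat.lt_succ_iff.mp (Finset.mem_range.mp hj)
  have h1 : r + 1 - 1 - j = r - j := by omega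
  have h2 : r - (r - j) = j := by omega
  rw [h1, h2, Nat.choose_symm hjr]
  have h3 : ((-1 : ℝ)) ^ (r - j) * (1 - t) ^ (r - j) = (t - 1) ^ (r - j) := by
    rw [← mul_pow]; ring_nf
  calc (-1 : ℝ) ^ (r - j) * (r.choose j : ℝ) ^ 2 * t ^ j * (1 - t) ^ (r - j)
      = (r.choose j : ℝ) ^ 2 * t ^ j * ((-1 : ℝ) ^ (r - j) * (1 - t) ^ (r - j)) := by ring
    _ = (r.choose j : ℝ) ^ 2 * t ^ j * (t - 1) ^ (r - j) := by rw [h3]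
end

section
/- Let F be a cdf with ∫|x| dF(x) < ∞. The r-th L-moment λ_r := (1/r) Σ_{k=0}^{r-1} (-1)^k C(r-1,k) E[X_{r-k:r}] satisfies λ_r = ∫_0^1 F^{-1}(t) L_{r-1}(t) dt, where L_{r-1} is the shifted Legendre polynomial of order r-1. -/
open MeasureTheory ProbabilityTheory Set

/-- The `i`-th order statistic (0-based) of a finite sample `v`. -/
noncomputable def orderStat {r : ℕ} (v : Fin r → ℝ) (i : ℕ) : ℝ :=
  (List.insertionSort (· ≤ ·) (List.ofFn v)).getD i 0

/-- The shifted Legendre polynomial of order `m`. -/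
def shiftedLegendre (m : ℕ) (t : ℝ) : ℝ :=
  ∑ k ∈ Finset.range (m + 1),
    (-1 : ℝ) ^ k * (Nat.choose m k : ℝ) ^ 2 * t ^ (m - k) * (1 - t) ^ k

open Filter
open scoped ENNReal NNReal

set_option linter.unusedSectionVars false
set_option linter.unusedVariables false

section quantile

variable (μ : Measure ℝ) [IsProbabilityMeasure μ]

lemma cdf_set_nonempty {t : ℝ} (ht1 : t < 1) : {y : ℝ | t ≤ cdf μ y}.Nonempty := by
  have h := (tendsto_cdf_atTop μ).eventually_const_le ht1
  rcases h.exists with ⟨y, hy⟩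
  exact ⟨y, hy⟩

lemma cdf_set_bddBelow {t : ℝ} (ht0 : 0 < t) : BddBelow {y : ℝ | t ≤ cdf μ y} := by
  have h := (tendsto_cdf_atBot μ).eventually_lt_const ht0
  rcases h.exists with ⟨y0, hy0⟩
  refine ⟨y0, fun y hy => ?_⟩
  by_contra hlt
  push_neg at hlt
  exact absurd (le_trans hy (monotone_cdf μ hlt.le)) (not_le.2 hy0)

lemma genInv_cdf_le_iff {t : ℝ} (ht0 : 0 < t) (ht1 : t < 1) (x : ℝ) :
    genInv (fun y => cdf μ y) t ≤ x ↔ t ≤ cdf μ x := by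
  set S := {y : ℝ | t ≤ cdf μ y} with hS
  have hne : S.Nonempty := cdf_set_nonempty μ ht1
  have hbdd : BddBelow S := cdf_set_bddBelow μ ht0
  constructor
  · intro h
    have hmem : t ≤ cdf μ (sInf S) := by
      have hcl : sInf S ∈ closure S := csInf_mem_closure hne hbdd
      have hnb : (nhdsWithin (sInf S) S).NeBot := mem_closure_iff_nhdsWithin_neBot.1 hcl
      have hsub : S ⊆ Ici (sInf S) := fun y hy => csInf_le hbdd hy
      have cont : Tendsto (fun y => cdf μ y) (nhdsWithin (sInf S) S) (nhds (cdf μ (sInf S))) :=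
        ((cdf μ).right_continuous (sInf S)).mono hsub
      refine ge_of_tendsto cont ?_
      filter_upwards [self_mem_nhdsWithin] with y hy
      exact hy
    exact le_trans hmem (monotone_cdf μ h)
  · intro h
    exact csInf_le hbdd h

lemma genInv_cdf_monotoneOn : MonotoneOn (genInv (fun y => cdf μ y)) (Ioo (0:ℝ) 1) := by
  intro a ha b hb hab
  exact csInf_le_csInf (cdf_set_bddBelow μ ha.1) (cdf_set_nonempty μ hb.2)
    (fun y hy => le_trans hab hy)

instance : IsProbabilityMeasure (volume.restrict (Ioo (0:ℝ) 1)) :=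
  ⟨by simp [Real.volume_Ioo]⟩

lemma aemeasurable_genInv_cdf :
    AEMeasurable (genInv (fun y => cdf μ y)) (volume.restrict (Ioo (0:ℝ) 1)) :=
  aemeasurable_restrict_of_monotoneOn measurableSet_Ioo (genInv_cdf_monotoneOn μ)

lemma volume_Iic_inter_Ioo {c : ℝ} (hc0 : 0 ≤ c) (hc1 : c ≤ 1) :
    volume (Iic c ∩ Ioo (0:ℝ) 1) = ENNReal.ofReal c := by
  rcases lt_or_eq_of_le hc1 with h1 | h1
  · have : Iic c ∩ Ioo (0:ℝ) 1 = Ioc 0 c := by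
      ext y
      simp only [mem_inter_iff, mem_Iic, mem_Ioo, mem_Ioc]
      constructor
      · rintro ⟨h, h0, _⟩; exact ⟨h0, h⟩
      · rintro ⟨h0, h⟩; exact ⟨h, h0, lt_of_le_of_lt h h1⟩
    rw [this, Real.volume_Ioc, sub_zero]
  · have : Iic c ∩ Ioo (0:ℝ) 1 = Ioo 0 1 := by
      ext y
      simp only [mem_inter_iff, mem_Iic, mem_Ioo]
      exact ⟨fun h => h.2, fun h => ⟨by linarith [h.2], h⟩⟩
    rw [this, Real.volume_Ioo, ← h1]
    norm_num

lemma restrict_apply_genInv_Iic (x : ℝ) :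
    (volume.restrict (Ioo (0:ℝ) 1)) ((genInv (fun y => cdf μ y)) ⁻¹' Iic x)
      = ENNReal.ofReal (cdf μ x) := by
  rw [Measure.restrict_apply' measurableSet_Ioo]
  have hset : (genInv (fun y => cdf μ y)) ⁻¹' Iic x ∩ Ioo (0:ℝ) 1
      = Iic (cdf μ x) ∩ Ioo (0:ℝ) 1 := by
    ext t
    simp only [mem_inter_iff, mem_preimage, mem_Iic, mem_Ioo]
    constructor
    · rintro ⟨h, h0, h1⟩
      exact ⟨(genInv_cdf_le_iff μ h0 h1 x).1 h, h0, h1⟩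
    · rintro ⟨h, h0, h1⟩
      exact ⟨(genInv_cdf_le_iff μ h0 h1 x).2 h, h0, h1⟩
  rw [hset, volume_Iic_inter_Ioo (cdf_nonneg μ x) (cdf_le_one μ x)]

lemma map_genInv_cdf :
    Measure.map (genInv (fun y => cdf μ y)) (volume.restrict (Ioo (0:ℝ) 1)) = μ := by
  have hmq := aemeasurable_genInv_cdf μ
  have : IsProbabilityMeasure
      (Measure.map (genInv (fun y => cdf μ y)) (volume.restrict (Ioo (0:ℝ) 1))) :=
    Measure.isProbabilityMeasure_map hmq
  refine Measure.ext_of_Iic _ μ (fun x => ?_)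
  rw [Measure.map_apply_of_aemeasurable hmq measurableSet_Iic,
    restrict_apply_genInv_Iic, ofReal_cdf]

end quantile

lemma sorted_getD_le_iff (x : ℝ) :
    ∀ (l : List ℝ), l.Pairwise (· ≤ ·) → ∀ (j : ℕ), j < l.length →
      (l.getD j 0 ≤ x ↔ j + 1 ≤ l.countP (fun a => decide (a ≤ x)))
  | [], _, j, hj => by simp at hj
  | a :: t, hs, 0, _ => by
      simp only [List.getD_cons_zero, List.countP_cons]
      constructor
      · intro h
        simp [h]
      · intro h
        by_contra hax
        have ht0 : t.countP (fun a => decide (a ≤ x)) = 0 := by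
          rw [List.countP_eq_zero]
          intro b hb
          have hab : a ≤ b := (List.pairwise_cons.1 hs).1 b hb
          simp only [decide_eq_true_eq]
          intro hbx
          exact hax (le_trans hab hbx)
        rw [ht0] at h
        simp [hax] at h
  | a :: t, hs, j + 1, hj => by
      have hst : t.Pairwise (· ≤ ·) := (List.pairwise_cons.1 hs).2
      have hjt : j < t.length := by simpa using hj
      have ih := sorted_getD_le_iff x t hst j hjt
      simp only [List.getD_cons_succ, List.countP_cons]
      by_cases hax : a ≤ x
      · have h1 : (if (decide (a ≤ x)) = true then 1 else 0) = 1 := by simp [hax]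
        rw [h1, ih]
        omega
      · have ht0 : t.countP (fun a => decide (a ≤ x)) = 0 := by
          rw [List.countP_eq_zero]
          intro b hb
          have hab : a ≤ b := (List.pairwise_cons.1 hs).1 b hb
          simp only [decide_eq_true_eq]
          intro hbx
          exact hax (le_trans hab hbx)
        have hmem : t.getD j 0 ∈ t := by
          rw [List.getD_eq_getElem t 0 hjt]
          exact List.getElem_mem hjt
        have hne : ¬ t.getD j 0 ≤ x := by
          intro hc
          exact hax (le_trans ((List.pairwise_cons.1 hs).1 _ hmem) hc)
        rw [ht0]
        refine iff_of_false hne ?_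
        simp [hax]

lemma countP_eq_sum_ite {α : Type*} (p : α → Prop) [DecidablePred p] :
    ∀ l : List α, l.countP (fun a => decide (p a))
      = (l.map (fun a => if p a then (1:ℕ) else 0)).sum
  | [] => by simp
  | a :: t => by
      rw [List.countP_cons, List.map_cons, List.sum_cons, countP_eq_sum_ite p t]
      by_cases h : p a <;> simp [h, Nat.add_comm]

open Classical in
lemma countP_ofFn_eq_card {r : ℕ} (v : Fin r → ℝ) (x : ℝ) :
    (List.ofFn v).countP (fun a => decide (a ≤ x))
      = (Finset.univ.filter (fun i => v i ≤ x)).card := by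
  rw [List.ofFn_eq_map, List.countP_map]
  have huniv : (Finset.univ : Finset (Fin r)) = (List.finRange r).toFinset := by
    ext i; simp
  rw [huniv, Finset.card_filter, List.sum_toFinset _ (List.nodup_finRange r)]
  exact countP_eq_sum_ite (fun i => v i ≤ x) (List.finRange r)

open Classical in
lemma orderStat_le_iff {r : ℕ} (v : Fin r → ℝ) (j : ℕ) (hj : j < r) (x : ℝ) :
    orderStat v j ≤ x ↔ j + 1 ≤ (Finset.univ.filter (fun i => v i ≤ x)).card := by
  have hlen : (List.insertionSort (· ≤ ·) (List.ofFn v)).length = r := by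
    rw [List.length_insertionSort, List.length_ofFn]
  have h := sorted_getD_le_iff x _ (List.pairwise_insertionSort _ (List.ofFn v)) j
    (by rw [hlen]; exact hj)
  rw [orderStat] at *
  rw [h, (List.perm_insertionSort (· ≤ ·) (List.ofFn v)).countP_eq,
    countP_ofFn_eq_card]

open Classical in
lemma card_le_set_eq {r : ℕ} (j : ℕ) (x : ℝ) :
    {v : Fin r → ℝ | j + 1 ≤ (Finset.univ.filter (fun i => v i ≤ x)).card}
      = ⋃ S ∈ (Finset.powersetCard (j+1) (Finset.univ : Finset (Fin r))),
          ⋂ i ∈ S, {v : Fin r → ℝ | v i ≤ x} := by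
  ext v
  simp only [mem_setOf_eq, mem_iUnion, mem_iInter, Finset.mem_powersetCard]
  constructor
  · intro h
    obtain ⟨S, hS, hcard⟩ := Finset.exists_subset_card_eq h
    exact ⟨S, ⟨fun i _ => Finset.mem_univ i, hcard⟩, fun i hi =>
      (Finset.mem_filter.1 (hS hi)).2⟩
  · rintro ⟨S, ⟨-, hcard⟩, hall⟩
    calc j + 1 = S.card := hcard.symm
      _ ≤ _ := Finset.card_le_card (fun i hi =>
          Finset.mem_filter.2 ⟨Finset.mem_univ i, hall i hi⟩)

open Classical in
lemma measurable_orderStat {r : ℕ} (j : ℕ) (hj : j < r) :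
    Measurable (fun v : Fin r → ℝ => orderStat v j) := by
  apply measurable_of_Iic
  intro x
  have hset : (fun v : Fin r → ℝ => orderStat v j) ⁻¹' Iic x
      = {v : Fin r → ℝ | j + 1 ≤ (Finset.univ.filter (fun i => v i ≤ x)).card} := by
    ext v
    simp only [mem_preimage, mem_Iic, mem_setOf_eq]
    exact orderStat_le_iff v j hj x
  rw [hset, card_le_set_eq]
  refine Set.Finite.measurableSet_biUnion (Finset.finite_toSet _) (fun S _ => ?_)
  refine Set.Finite.measurableSet_biInter (Finset.finite_toSet _) (fun i _ => ?_)
  exact measurableSet_le (measurable_pi_apply i) measurable_const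

/-- cdf of the (j+1)-th smallest of r uniforms, as polynomial in c -/
def binCdf (r j : ℕ) (c : ℝ) : ℝ :=
  ∑ m ∈ Finset.Ioc j r, (r.choose m : ℝ) * c ^ m * (1 - c) ^ (r - m)

def bdens (r j : ℕ) (t : ℝ) : ℝ :=
  ((j+1 : ℕ) : ℝ) * (r.choose (j+1) : ℝ) * t ^ j * (1 - t) ^ (r - 1 - j)

open Classical in
lemma sum_powerset_card_filter (r j : ℕ) (f : ℕ → ℝ) :
    ∑ S ∈ (Finset.univ : Finset (Fin r)).powerset.filter (fun S => j + 1 ≤ S.card),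
        f S.card
      = ∑ m ∈ Finset.Ioc j r, (r.choose m : ℝ) * f m := by
  rw [Finset.sum_filter, Finset.powerset_card_disjiUnion]
  erw [Finset.sum_disjiUnion]
  have hstep : ∀ m ∈ Finset.range (Finset.univ : Finset (Fin r)).card.succ,
      (∑ S ∈ Finset.powersetCard m (Finset.univ : Finset (Fin r)),
          if j + 1 ≤ S.card then f S.card else 0)
        = if j + 1 ≤ m then (r.choose m : ℝ) * f m else 0 := by
    intro m _
    have : ∀ S ∈ Finset.powersetCard m (Finset.univ : Finset (Fin r)),
        (if j + 1 ≤ S.card then f S.card else 0) = if j + 1 ≤ m then f m else 0 := by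
      intro S hS
      rw [(Finset.mem_powersetCard.1 hS).2]
    rw [Finset.sum_congr rfl this, Finset.sum_const, Finset.card_powersetCard,
      Finset.card_univ, Fintype.card_fin]
    by_cases h : j + 1 ≤ m <;> simp [h, mul_comm]
  rw [Finset.sum_congr rfl hstep, ← Finset.sum_filter]
  have hset : (Finset.range (Finset.univ : Finset (Fin r)).card.succ).filter
      (fun m => j + 1 ≤ m) = Finset.Ioc j r := by
    ext m
    simp only [Finset.mem_filter, Finset.mem_range, Finset.mem_Ioc, Finset.card_univ,
      Fintype.card_fin, Nat.lt_succ_iff]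
    omega
  rw [hset]

lemma hasDerivAt_term (r m : ℕ) (c : ℝ) :
    HasDerivAt (fun c : ℝ => (r.choose m : ℝ) * c ^ m * (1 - c) ^ (r - m))
      ((r.choose m : ℝ) * ((m : ℝ) * c ^ (m - 1) * (1 - c) ^ (r - m)
        - c ^ m * ((r - m : ℕ) : ℝ) * (1 - c) ^ (r - m - 1))) c := by
  have h1 : HasDerivAt (fun c : ℝ => c ^ m) ((m : ℝ) * c ^ (m - 1)) c := hasDerivAt_pow m c
  have h2 : HasDerivAt (fun c : ℝ => (1 - c) ^ (r - m))
      (((r - m : ℕ) : ℝ) * (1 - c) ^ (r - m - 1) * (-1)) c := by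
    have hin : HasDerivAt (fun c : ℝ => 1 - c) (-1) c := by
      simpa using (hasDerivAt_id c).const_sub 1
    exact (hasDerivAt_pow (r - m) (1 - c)).comp c hin
  have := (h1.fun_mul h2).const_mul ((r.choose m : ℝ))
  have heq : (fun c : ℝ => (r.choose m : ℝ) * c ^ m * (1 - c) ^ (r - m))
      = fun y : ℝ => (r.choose m : ℝ) * (y ^ m * (1 - y) ^ (r - m)) := by
    funext y; ring
  rw [heq]
  exact this.congr_deriv (by ring)

lemma choose_mul_id (r m : ℕ) (hm : m ≤ r) :
    (r.choose m : ℝ) * ((r - m : ℕ) : ℝ) = (r.choose (m+1) : ℝ) * ((m+1 : ℕ) : ℝ) := by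
  have h := Nat.choose_succ_right_eq r m
  exact_mod_cast h.symm

lemma hasDerivAt_binCdf (r j : ℕ) (hj : j < r) (c : ℝ) :
    HasDerivAt (binCdf r j) (bdens r j c) c := by
  set a : ℕ → ℝ := fun m => (r.choose m : ℝ) * (m : ℝ) * c ^ (m - 1) * (1 - c) ^ (r - m)
    with ha
  have hsum : HasDerivAt (binCdf r j)
      (∑ m ∈ Finset.Ioc j r, (r.choose m : ℝ) * ((m : ℝ) * c ^ (m - 1) * (1 - c) ^ (r - m)
        - c ^ m * ((r - m : ℕ) : ℝ) * (1 - c) ^ (r - m - 1))) c := by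
    exact HasDerivAt.fun_sum (fun m _ => hasDerivAt_term r m c)
  have hterm : ∀ m ∈ Finset.Ioc j r,
      (r.choose m : ℝ) * ((m : ℝ) * c ^ (m - 1) * (1 - c) ^ (r - m)
        - c ^ m * ((r - m : ℕ) : ℝ) * (1 - c) ^ (r - m - 1))
      = a m - a (m + 1) := by
    intro m hm
    rw [Finset.mem_Ioc] at hm
    have key : (r.choose m : ℝ) * ((r - m : ℕ) : ℝ) = (r.choose (m+1) : ℝ) * ((m+1 : ℕ) : ℝ) :=
      choose_mul_id r m hm.2
    simp only [ha]
    have h1 : m + 1 - 1 = m := by omega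
    have h2 : r - (m + 1) = r - m - 1 := by omega
    rw [h1, h2]
    linear_combination (-(c ^ m * (1 - c) ^ (r - m - 1))) * key
  rw [Finset.sum_congr rfl hterm] at hsum
  have htel : ∑ m ∈ Finset.Ioc j r, (a m - a (m + 1)) = a (j + 1) - a (r + 1) := by
    have hinj : Function.Injective (fun i : ℕ => j + 1 + i) := fun a b h => by simp only at h; omega
    have : Finset.Ioc j r = Finset.map ⟨fun i => j + 1 + i, hinj⟩
        (Finset.range (r - j)) := by
      ext m
      simp only [Finset.mem_Ioc, Finset.mem_map, Finset.mem_range, Function.Embedding.coeFn_mk]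
      constructor
      · intro h; exact ⟨m - (j+1), by omega, by omega⟩
      · rintro ⟨i, hi, rfl⟩; omega
    rw [this, Finset.sum_map]
    simp only [Function.Embedding.coeFn_mk]
    have hrj : j + 1 + (r - j) = r + 1 := by omega
    have h0 := Finset.sum_range_sub' (fun i => a (j + 1 + i)) (r - j)
    rw [hrj] at h0
    exact h0
  rw [htel] at hsum
  have har : a (r + 1) = 0 := by
    simp [ha, Nat.choose_succ_self]
  have haj : a (j + 1) = bdens r j c := by
    simp only [ha, bdens]
    have h1 : j + 1 - 1 = j := by omega
    have h2 : r - (j + 1) = r - 1 - j := by omega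
    rw [h1, h2]
    push_cast
    ring
  rwa [har, sub_zero, haj] at hsum

lemma binCdf_zero (r j : ℕ) : binCdf r j 0 = 0 := by
  rw [binCdf]
  refine Finset.sum_eq_zero (fun m hm => ?_)
  rw [Finset.mem_Ioc] at hm
  rw [zero_pow (by omega)]
  ring

lemma continuous_bdens (r j : ℕ) : Continuous (bdens r j) := by
  unfold bdens
  fun_prop

lemma integral_bdens (r j : ℕ) (hj : j < r) (c : ℝ) :
    ∫ t in (0:ℝ)..c, bdens r j t = binCdf r j c := by
  have := intervalIntegral.integral_eq_sub_of_hasDerivAt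
    (f := binCdf r j) (f' := bdens r j) (a := 0) (b := c)
    (fun t _ => hasDerivAt_binCdf r j hj t)
    ((continuous_bdens r j).intervalIntegrable 0 c)
  rw [this, binCdf_zero, sub_zero]

open Classical in
lemma pi_orderStat_apply {r : ℕ} (μ : Measure ℝ) [IsProbabilityMeasure μ]
    (j : ℕ) (hj : j < r) (x : ℝ) :
    Measure.pi (fun _ : Fin r => μ) {v | orderStat v j ≤ x}
      = ENNReal.ofReal (binCdf r j (cdf μ x)) := by
  classical
  set c : ℝ := cdf μ x with hc
  have hc0 : 0 ≤ c := cdf_nonneg μ x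
  have hc1 : c ≤ 1 := cdf_le_one μ x
  set P : Finset (Finset (Fin r)) :=
    (Finset.univ : Finset (Fin r)).powerset.filter (fun S => j + 1 ≤ S.card) with hP
  set B : Finset (Fin r) → Set (Fin r → ℝ) :=
    fun S => Set.univ.pi (fun i => if i ∈ S then Iic x else Ioi x) with hB
  have hBmem : ∀ (S : Finset (Fin r)) (v : Fin r → ℝ),
      v ∈ B S ↔ Finset.univ.filter (fun i => v i ≤ x) = S := by
    intro S v
    simp only [hB, Set.mem_pi, Set.mem_univ, forall_true_left]
    constructor
    · intro h
      ext i
      simp only [Finset.mem_filter, Finset.mem_univ, true_and]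
      constructor
      · intro hvi
        by_contra hiS
        have := h i
        rw [if_neg hiS] at this
        exact absurd hvi (not_le.2 this)
      · intro hiS
        have := h i
        rw [if_pos hiS] at this
        exact this
    · intro h i
      by_cases hiS : i ∈ S
      · rw [if_pos hiS]
        rw [← h] at hiS
        exact (Finset.mem_filter.1 hiS).2
      · rw [if_neg hiS]
        rw [← h] at hiS
        simp only [Finset.mem_filter, Finset.mem_univ, true_and] at hiS
        exact not_le.1 hiS
  have hset : {v : Fin r → ℝ | orderStat v j ≤ x} = ⋃ S ∈ P, B S := by
    ext v
    simp only [mem_setOf_eq, orderStat_le_iff v j hj x, mem_iUnion]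
    constructor
    · intro h
      refine ⟨Finset.univ.filter (fun i => v i ≤ x), ?_, (hBmem _ v).2 rfl⟩
      simp only [hP, Finset.mem_filter, Finset.mem_powerset]
      exact ⟨Finset.filter_subset _ _, h⟩
    · rintro ⟨S, hS, hv⟩
      rw [hBmem S v] at hv
      rw [hv]
      simp only [hP, Finset.mem_filter] at hS
      exact hS.2
  have hBmeas : ∀ S : Finset (Fin r), MeasurableSet (B S) := by
    intro S
    refine MeasurableSet.univ_pi (fun i => ?_)
    by_cases hiS : i ∈ S
    · rw [if_pos hiS]; exact measurableSet_Iic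
    · rw [if_neg hiS]; exact measurableSet_Ioi
  have hdisj : (↑P : Set (Finset (Fin r))).PairwiseDisjoint B := by
    intro S hS S' hS' hne
    refine Set.disjoint_left.2 (fun v hv hv' => ?_)
    rw [hBmem S v] at hv
    rw [hBmem S' v] at hv'
    exact hne (hv ▸ hv')
  rw [hset, measure_biUnion_finset hdisj (fun S _ => hBmeas S)]
  have hterm : ∀ S ∈ P, Measure.pi (fun _ : Fin r => μ) (B S)
      = ENNReal.ofReal (c ^ S.card * (1 - c) ^ (r - S.card)) := by
    intro S hS
    rw [hB]
    rw [Measure.pi_pi]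
    have hIic : μ (Iic x) = ENNReal.ofReal c := (ofReal_cdf μ x).symm
    have hIoi : μ (Ioi x) = ENNReal.ofReal (1 - c) := by
      rw [← compl_Iic, prob_compl_eq_one_sub measurableSet_Iic, hIic,
        ← ENNReal.ofReal_one, ← ENNReal.ofReal_sub _ hc0]
    have : ∀ i : Fin r, μ (if i ∈ S then Iic x else Ioi x)
        = if i ∈ S then ENNReal.ofReal c else ENNReal.ofReal (1 - c) := by
      intro i
      by_cases hiS : i ∈ S <;> simp [hiS, hIic, hIoi]
    rw [Finset.prod_congr rfl (fun i _ => this i), Finset.prod_ite, Finset.prod_const,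
      Finset.prod_const]
    have h1 : (Finset.univ.filter (fun i => i ∈ S)).card = S.card := by
      rw [Finset.filter_mem_eq_inter, Finset.univ_inter]
    have h2 : (Finset.univ.filter (fun i => ¬ i ∈ S)).card = r - S.card := by
      have := Finset.card_filter_add_card_filter_not
        (s := (Finset.univ : Finset (Fin r))) (p := fun i => i ∈ S)
      rw [h1] at this
      simp only [Finset.card_univ, Fintype.card_fin] at this
      omega
    rw [h1, h2, ← ENNReal.ofReal_pow hc0, ← ENNReal.ofReal_pow (by linarith),
      ← ENNReal.ofReal_mul (pow_nonneg hc0 _)]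
  rw [Finset.sum_congr rfl hterm,
    ← ENNReal.ofReal_sum_of_nonneg (fun S _ => mul_nonneg (pow_nonneg hc0 _) (pow_nonneg (by linarith) _))]
  congr 1
  rw [sum_powerset_card_filter r j (fun m => c ^ m * (1 - c) ^ (r - m)), binCdf]
  exact Finset.sum_congr rfl (fun m _ => by ring)

noncomputable def betaM (r j : ℕ) : Measure ℝ :=
  (volume.restrict (Ioo (0:ℝ) 1)).withDensity (fun t => ENNReal.ofReal (bdens r j t))

lemma betaM_compl_Ioo (r j : ℕ) : betaM r j (Ioo (0:ℝ) 1)ᶜ = 0 := by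
  rw [betaM, withDensity_apply _ (measurableSet_Ioo.compl),
    Measure.restrict_restrict measurableSet_Ioo.compl, compl_inter_self,
    Measure.restrict_empty]
  simp

lemma betaM_ae_Ioo (r j : ℕ) : ∀ᵐ t ∂(betaM r j), t ∈ Ioo (0:ℝ) 1 := by
  rw [ae_iff]
  have h : {t | ¬ t ∈ Ioo (0:ℝ) 1} = (Ioo (0:ℝ) 1)ᶜ := rfl
  rw [h, betaM_compl_Ioo r j]

lemma bdens_nonneg (r j : ℕ) {t : ℝ} (ht0 : 0 ≤ t) (ht1 : t ≤ 1) : 0 ≤ bdens r j t := by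
  unfold bdens
  have : (0:ℝ) ≤ 1 - t := by linarith
  positivity

lemma betaM_Iic (r j : ℕ) (hj : j < r) {c : ℝ} (hc0 : 0 ≤ c) (hc1 : c ≤ 1) :
    betaM r j (Iic c) = ENNReal.ofReal (binCdf r j c) := by
  rw [betaM, withDensity_apply _ measurableSet_Iic,
    Measure.restrict_restrict measurableSet_Iic]
  have hint : IntegrableOn (bdens r j) (Iic c ∩ Ioo 0 1) volume := by
    refine ((continuous_bdens r j).integrableOn_Icc (a := 0) (b := 1)).mono_set ?_
    intro t ht
    exact ⟨le_of_lt ht.2.1, le_of_lt ht.2.2⟩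
  have hnn : 0 ≤ᵐ[volume.restrict (Iic c ∩ Ioo 0 1)] (bdens r j) := by
    filter_upwards [ae_restrict_mem (measurableSet_Iic.inter measurableSet_Ioo)] with t ht
    exact bdens_nonneg r j (le_of_lt ht.2.1) (le_of_lt ht.2.2)
  rw [← ofReal_integral_eq_lintegral_ofReal hint hnn]
  congr 1
  rcases lt_or_eq_of_le hc1 with h1 | h1
  · have hset : Iic c ∩ Ioo (0:ℝ) 1 = Ioc 0 c := by
      ext t
      simp only [mem_inter_iff, mem_Iic, mem_Ioo, mem_Ioc]
      constructor
      · rintro ⟨h, h0, _⟩; exact ⟨h0, h⟩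
      · rintro ⟨h0, h⟩; exact ⟨h, h0, lt_of_le_of_lt h h1⟩
    rw [hset, ← intervalIntegral.integral_of_le hc0, integral_bdens r j hj]
  · have hset : Iic c ∩ Ioo (0:ℝ) 1 = Ioo 0 1 := by
      ext t
      simp only [mem_inter_iff, mem_Iic, mem_Ioo]
      exact ⟨fun h => h.2, fun h => ⟨by linarith [h.2], h⟩⟩
    rw [hset, ← MeasureTheory.integral_Ioc_eq_integral_Ioo, ← h1,
      ← intervalIntegral.integral_of_le hc0, integral_bdens r j hj]

lemma map_orderStat_eq_map_genInv {r : ℕ} (μ : Measure ℝ) [IsProbabilityMeasure μ]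
    (j : ℕ) (hj : j < r) :
    Measure.map (fun v => orderStat v j) (Measure.pi (fun _ : Fin r => μ))
      = Measure.map (genInv (fun y => cdf μ y)) (betaM r j) := by
  have hmos := measurable_orderStat j hj
  have hqβ : AEMeasurable (genInv (fun y => cdf μ y)) (betaM r j) :=
    (aemeasurable_genInv_cdf μ).mono_ac (withDensity_absolutelyContinuous _ _)
  have : IsProbabilityMeasure (Measure.pi (fun _ : Fin r => μ)) := by infer_instance
  have : IsProbabilityMeasure
      (Measure.map (fun v => orderStat v j) (Measure.pi (fun _ : Fin r => μ))) :=
    Measure.isProbabilityMeasure_map hmos.aemeasurable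
  refine Measure.ext_of_Iic _ _ (fun x => ?_)
  rw [Measure.map_apply hmos measurableSet_Iic,
    Measure.map_apply_of_aemeasurable hqβ measurableSet_Iic]
  have h1 : (fun v : Fin r → ℝ => orderStat v j) ⁻¹' Iic x = {v | orderStat v j ≤ x} := rfl
  rw [h1, pi_orderStat_apply μ j hj x]
  have hcong : (genInv (fun y => cdf μ y) ⁻¹' Iic x : Set ℝ) =ᵐ[betaM r j] Iic (cdf μ x) := by
    have := betaM_ae_Ioo r j
    rw [Filter.eventuallyEq_set]
    filter_upwards [this] with t ht
    simp only [mem_preimage, mem_Iic]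
    exact genInv_cdf_le_iff μ ht.1 ht.2 x
  rw [measure_congr hcong, betaM_Iic r j hj (cdf_nonneg μ x) (cdf_le_one μ x)]

lemma integral_orderStat_pi {r : ℕ} (μ : Measure ℝ) [IsProbabilityMeasure μ]
    (j : ℕ) (hj : j < r) :
    ∫ v, orderStat v j ∂(Measure.pi (fun _ : Fin r => μ))
      = ∫ t in Ioo (0:ℝ) 1, genInv (fun y => cdf μ y) t * bdens r j t := by
  have hmos := measurable_orderStat (r := r) j hj
  have hqβ : AEMeasurable (genInv (fun y => cdf μ y)) (betaM r j) :=
    (aemeasurable_genInv_cdf μ).mono_ac (withDensity_absolutelyContinuous _ _)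
  have h1 : ∫ v, orderStat v j ∂(Measure.pi (fun _ : Fin r => μ))
      = ∫ y, y ∂(Measure.map (fun v => orderStat v j) (Measure.pi (fun _ : Fin r => μ))) :=
    (integral_map (φ := fun v => orderStat v j) hmos.aemeasurable
      (f := fun y => y) aestronglyMeasurable_id).symm
  rw [h1, map_orderStat_eq_map_genInv μ j hj,
    integral_map (f := fun y => y) hqβ aestronglyMeasurable_id]
  have h2 : betaM r j = (volume.restrict (Ioo (0:ℝ) 1)).withDensity
      (fun t => ((fun t => (bdens r j t).toNNReal) t : ℝ≥0∞)) := rfl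
  rw [h2, integral_withDensity_eq_integral_smul₀
    ((continuous_bdens r j).measurable.real_toNNReal.aemeasurable) _]
  refine integral_congr_ae ?_
  filter_upwards [ae_restrict_mem measurableSet_Ioo] with t ht
  simp only [NNReal.smul_def, smul_eq_mul]
  rw [Real.coe_toNNReal _ (bdens_nonneg r j (le_of_lt ht.1) (le_of_lt ht.2)), mul_comm]

lemma map_joint_eq_pi {Ω : Type*} [MeasurableSpace Ω] (P : Measure Ω) [IsProbabilityMeasure P]
    {r : ℕ} (μ : Measure ℝ) [IsProbabilityMeasure μ] (X : Fin r → Ω → ℝ)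
    (hXmeas : ∀ i, Measurable (X i)) (hXlaw : ∀ i, Measure.map (X i) P = μ)
    (hXindep : iIndepFun X P) :
    Measure.map (fun ω i => X i ω) P = Measure.pi (fun _ : Fin r => μ) := by
  refine (Measure.pi_eq (fun s hs => ?_)).symm
  rw [Measure.map_apply (measurable_pi_lambda _ hXmeas) (MeasurableSet.univ_pi hs)]
  have hpre : (fun ω i => X i ω) ⁻¹' (Set.univ.pi s) = ⋂ i ∈ Finset.univ, X i ⁻¹' s i := by
    ext ω
    simp [Set.mem_pi]
  rw [hpre, hXindep.measure_inter_preimage_eq_mul Finset.univ (fun i _ => hs i)]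
  refine Finset.prod_congr rfl (fun i _ => ?_)
  rw [← hXlaw i, Measure.map_apply (hXmeas i) (hs i)]

lemma nat_coeff_id (r k : ℕ) (hk : k < r) :
    r * (r-1).choose k = r.choose (r - k) * (r - k) := by
  have h1 := Nat.add_one_mul_choose_eq (r-1) (r-1-k)
  have h2 : r - 1 + 1 = r := by omega
  have h3 : r - 1 - k + 1 = r - k := by omega
  rw [h2, h3] at h1
  rwa [Nat.choose_symm (by omega : k ≤ r - 1)] at h1

/-- For a cdf `F` with finite first absolute moment, the `r`-th L-moment
`λ_r = (1/r) ∑_{k=0}^{r-1} (-1)^k C(r-1,k) E[X_{r-k:r}]` equals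
`∫_0^1 F⁻¹(t) L_{r-1}(t) dt`. -/
theorem lmoment_eq_integral_quantile_shiftedLegendre
    {Ω : Type*} [MeasurableSpace Ω] (P : Measure Ω) [IsProbabilityMeasure P]
    (r : ℕ) (hr : 1 ≤ r) (μ : Measure ℝ) [IsProbabilityMeasure μ]
    (hmom : Integrable (fun x : ℝ => |x|) μ)
    (F : ℝ → ℝ) (hF : ∀ x, F x = (μ (Iic x)).toReal)
    (X : Fin r → Ω → ℝ) (hXmeas : ∀ i, Measurable (X i))
    (hXlaw : ∀ i, Measure.map (X i) P = μ)
    (hXindep : iIndepFun X P) :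
    (1 / (r : ℝ)) * ∑ k ∈ Finset.range r,
        (-1 : ℝ) ^ k * (Nat.choose (r - 1) k : ℝ)
          * ∫ ω, orderStat (fun i => X i ω) (r - 1 - k) ∂P
      = ∫ t in Ioo (0:ℝ) 1, genInv F t * shiftedLegendre (r - 1) t := by
  have hFc : F = fun y => cdf μ y := by
    funext x
    rw [hF, cdf_eq_real, measureReal_def]
  set q : ℝ → ℝ := genInv (fun y => cdf μ y) with hq
  rw [hFc]
  -- expectation of each order statistic
  have hjoint := map_joint_eq_pi P μ X hXmeas hXlaw hXindep
  have hexp : ∀ k ∈ Finset.range r,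
      (∫ ω, orderStat (fun i => X i ω) (r - 1 - k) ∂P)
        = ∫ t in Ioo (0:ℝ) 1, q t * bdens r (r - 1 - k) t := by
    intro k hk
    rw [Finset.mem_range] at hk
    have hj : r - 1 - k < r := by omega
    have h1 : (∫ ω, orderStat (fun i => X i ω) (r - 1 - k) ∂P)
        = ∫ v, orderStat v (r - 1 - k) ∂(Measure.map (fun ω i => X i ω) P) :=
      (integral_map (φ := fun ω i => X i ω)
        (measurable_pi_lambda _ hXmeas).aemeasurable
        (f := fun v => orderStat v (r - 1 - k))
        (measurable_orderStat _ hj).aestronglyMeasurable).symm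
    rw [h1, hjoint, integral_orderStat_pi μ _ hj]
  rw [Finset.sum_congr rfl (fun k hk => by rw [hexp k hk])]
  -- integrability of q
  have hid : Integrable (fun y : ℝ => y) μ :=
    hmom.mono' aestronglyMeasurable_id
      (Filter.Eventually.of_forall (fun x => by simp [Real.norm_eq_abs]))
  have hqint : Integrable q (volume.restrict (Ioo (0:ℝ) 1)) := by
    rw [← map_genInv_cdf μ] at hid
    exact (integrable_map_measure aestronglyMeasurable_id (aemeasurable_genInv_cdf μ)).1 hid
  -- integrability of each term
  have hterm_int : ∀ k ∈ Finset.range r, Integrable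
      (fun t => q t * ((-1:ℝ)^k * ((r-1).choose k : ℝ)^2 * t^(r-1-k) * (1-t)^k))
      (volume.restrict (Ioo (0:ℝ) 1)) := by
    intro k hk
    have hpoly : Continuous (fun t : ℝ => (-1:ℝ)^k * ((r-1).choose k : ℝ)^2
        * t^(r-1-k) * (1-t)^k) := by fun_prop
    have hb : ∀ᵐ t ∂(volume.restrict (Ioo (0:ℝ) 1)),
        ‖(-1:ℝ)^k * ((r-1).choose k : ℝ)^2 * t^(r-1-k) * (1-t)^k‖
          ≤ ((r-1).choose k : ℝ)^2 := by
      filter_upwards [ae_restrict_mem measurableSet_Ioo] with t ht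
      have h1 : |t| ^ (r-1-k) ≤ 1 :=
        pow_le_one₀ (abs_nonneg t) (abs_le.2 ⟨by linarith [ht.1], le_of_lt ht.2⟩)
      have h2 : |1 - t| ^ k ≤ 1 :=
        pow_le_one₀ (abs_nonneg _) (abs_le.2 ⟨by linarith [ht.2], by linarith [ht.1]⟩)
      have h3 : (0:ℝ) ≤ ((r-1).choose k : ℝ)^2 := by positivity
      simp only [Real.norm_eq_abs, abs_mul, abs_pow, abs_neg, abs_one, one_pow, one_mul,
        sq_abs]
      have hab : |t|^(r-1-k) * |1-t|^k ≤ 1 :=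
        mul_le_one₀ h1 (pow_nonneg (abs_nonneg _) k) h2
      calc ((r-1).choose k : ℝ)^2 * |t|^(r-1-k) * |1-t|^k
          = ((r-1).choose k : ℝ)^2 * (|t|^(r-1-k) * |1-t|^k) := by ring
        _ ≤ ((r-1).choose k : ℝ)^2 * 1 := mul_le_mul_of_nonneg_left hab h3
        _ = ((r-1).choose k : ℝ)^2 := mul_one _
    have := hqint.bdd_mul hpoly.aestronglyMeasurable hb
    exact this.congr (Filter.Eventually.of_forall (fun t => by ring))
  -- now pure algebra + sum/integral exchange
  have hrr : r - 1 + 1 = r := by omega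
  have hRHS : (fun t => q t * shiftedLegendre (r-1) t)
      = fun t => ∑ k ∈ Finset.range r,
          q t * ((-1:ℝ)^k * ((r-1).choose k : ℝ)^2 * t^(r-1-k) * (1-t)^k) := by
    funext t
    rw [shiftedLegendre, hrr, Finset.mul_sum]
  show _ = ∫ t in Ioo (0:ℝ) 1, q t * shiftedLegendre (r-1) t
  rw [hRHS, integral_finset_sum _ hterm_int, Finset.mul_sum]
  refine Finset.sum_congr rfl (fun k hk => ?_)
  rw [Finset.mem_range] at hk
  -- coefficient identity
  have hcoeff : ∀ t ∈ Ioo (0:ℝ) 1, (1 / (r:ℝ)) * ((-1:ℝ)^k * ((r-1).choose k : ℝ)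
        * (q t * bdens r (r-1-k) t))
      = q t * ((-1:ℝ)^k * ((r-1).choose k : ℝ)^2 * t^(r-1-k) * (1-t)^k) := by
    intro t _
    have h1 : r - 1 - k + 1 = r - k := by omega
    have h2 : r - 1 - (r - 1 - k) = k := by omega
    rw [bdens, h1, h2]
    have hnat := nat_coeff_id r k hk
    have hcast : (r : ℝ) * ((r-1).choose k : ℝ) = (r.choose (r-k) : ℝ) * ((r-k : ℕ) : ℝ) := by
      exact_mod_cast hnat
    have hr0 : (r : ℝ) ≠ 0 := by positivity
    have hrr' : (1/(r:ℝ)) * ((r-k : ℕ):ℝ) * (r.choose (r-k) : ℝ) = ((r-1).choose k : ℝ) := by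
      field_simp
      linarith [hcast]
    linear_combination ((-1:ℝ)^k * ((r-1).choose k : ℝ) * q t * t^(r-1-k) * (1-t)^k) * hrr' 
  have hconst : (1/(r:ℝ)) * ((-1:ℝ)^k * ((r-1).choose k : ℝ)
        * ∫ t in Ioo (0:ℝ) 1, q t * bdens r (r-1-k) t)
      = ∫ t in Ioo (0:ℝ) 1, (1/(r:ℝ)) * ((-1:ℝ)^k * ((r-1).choose k : ℝ)
          * (q t * bdens r (r-1-k) t)) := by
    rw [integral_const_mul ((1:ℝ)/r)]
    rw [integral_const_mul ((-1:ℝ)^k * ((r-1).choose k : ℝ))]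
  rw [hconst]
  refine integral_congr_ae ?_
  filter_upwards [ae_restrict_mem measurableSet_Ioo] with t ht
  linear_combination (hcoeff t ht)
end

section
/- Let r ≥ 2 and let F be a cdf with ∫|x| dF(x) < ∞. Then λ_r = ∫_0^1 F^{-1}(t) dK_r(t) = -∫_0^1 K_r(t) dF^{-1}(t), where K_r(t) = ∫_0^t L_{r-1}(u) du is the integrated shifted Legendre polynomial, λ_r is the r-th L-moment, and dF^{-1} denotes the Stieltjes measure associated with the non-decreasing function F^{-1} on (0,1). -/
open MeasureTheory Set

/-- The integrated shifted Legendre polynomial `K_r(t) = ∫_0^t L_{r-1}(u) du`. -/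
noncomputable def intShiftedLegendre (r : ℕ) (t : ℝ) : ℝ :=
  ∫ u in (0:ℝ)..t, shiftedLegendre (r - 1) u


lemma cont_pp (p q : ℕ) : Continuous (fun x : ℝ => x ^ p * (1 - x) ^ q) :=
  (continuous_pow p).mul ((continuous_const.sub continuous_id).pow q)

lemma beta_nat (b a : ℕ) :
    ∫ x in (0:ℝ)..1, x ^ a * (1 - x) ^ b
      = (Nat.factorial a * Nat.factorial b : ℝ) / Nat.factorial (a + b + 1) := by
  induction b generalizing a with
  | zero =>
    simp only [pow_zero, mul_one, integral_pow]
    have h : (Nat.factorial a : ℝ) ≠ 0 := by exact_mod_cast Nat.factorial_ne_zero _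
    rw [show a + 0 + 1 = a + 1 from rfl, Nat.factorial_succ, Nat.factorial_zero]
    push_cast
    rw [div_eq_div_iff (by positivity) (by positivity)]
    ring
  | succ b ih =>
    have hder : ∀ x ∈ uIcc (0:ℝ) 1,
        HasDerivAt (fun x : ℝ => x ^ (a+1) * (1 - x) ^ (b+1))
          (((a:ℝ)+1) * x ^ a * (1-x) ^ (b+1) - ((b:ℝ)+1) * x ^ (a+1) * (1-x) ^ b) x := by
      intro x _
      have h1 : HasDerivAt (fun x : ℝ => x ^ (a+1)) (((a:ℝ)+1) * x ^ a) x := by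
        simpa using hasDerivAt_pow (a+1) x
      have h2 : HasDerivAt (fun x : ℝ => (1 - x) ^ (b+1)) (-(((b:ℝ)+1) * (1-x) ^ b)) x := by
        have h0 : HasDerivAt (fun x : ℝ => 1 - x) (-1) x := by
          simpa using (hasDerivAt_id x).const_sub 1
        have := h0.fun_pow (b+1)
        refine this.congr_deriv ?_
        simp only [Nat.add_sub_cancel]
        push_cast
        ring
      have := h1.fun_mul h2
      refine this.congr_deriv ?_
      push_cast
      ring
    have i1 : IntervalIntegrable (fun x : ℝ => ((a:ℝ)+1) * x ^ a * (1-x) ^ (b+1)) volume 0 1 := by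
      apply Continuous.intervalIntegrable; fun_prop
    have i2 : IntervalIntegrable (fun x : ℝ => ((b:ℝ)+1) * x ^ (a+1) * (1-x) ^ b) volume 0 1 := by
      apply Continuous.intervalIntegrable; fun_prop
    have hint : IntervalIntegrable
        (fun x : ℝ => ((a:ℝ)+1) * x ^ a * (1-x) ^ (b+1) - ((b:ℝ)+1) * x ^ (a+1) * (1-x) ^ b)
        volume 0 1 := by
      apply Continuous.intervalIntegrable; fun_prop
    have key := intervalIntegral.integral_eq_sub_of_hasDerivAt
      (f' := fun x : ℝ => ((a:ℝ)+1) * x ^ a * (1-x) ^ (b+1) - ((b:ℝ)+1) * x ^ (a+1) * (1-x) ^ b)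
      hder hint
    rw [intervalIntegral.integral_sub i1 i2] at key
    have e1 : ∫ x in (0:ℝ)..1, ((a:ℝ)+1) * x ^ a * (1-x) ^ (b+1)
        = ((a:ℝ)+1) * ∫ x in (0:ℝ)..1, x ^ a * (1-x) ^ (b+1) := by
      rw [← intervalIntegral.integral_const_mul]
      apply intervalIntegral.integral_congr
      intro x _
      ring
    have e2 : ∫ x in (0:ℝ)..1, ((b:ℝ)+1) * x ^ (a+1) * (1-x) ^ b
        = ((b:ℝ)+1) * ∫ x in (0:ℝ)..1, x ^ (a+1) * (1-x) ^ b := by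
      rw [← intervalIntegral.integral_const_mul]
      apply intervalIntegral.integral_congr
      intro x _
      ring
    rw [e1, e2, ih (a+1)] at key
    have hfin : (1:ℝ) ^ (a+1) * (1-1) ^ (b+1) - (0:ℝ) ^ (a+1) * (1-0) ^ (b+1) = 0 := by
      norm_num
    rw [hfin] at key
    have hidx : a + 1 + b + 1 = a + (b+1) + 1 := by omega
    rw [hidx] at key
    have ha : ((a:ℝ)+1) ≠ 0 := by positivity
    have hfac : (Nat.factorial (a + (b+1) + 1) : ℝ) ≠ 0 := by
      exact_mod_cast Nat.factorial_ne_zero _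
    have hX : (∫ x in (0:ℝ)..1, x ^ a * (1-x) ^ (b+1))
        = ((b:ℝ)+1) * ((Nat.factorial (a+1) * Nat.factorial b : ℝ)
            / Nat.factorial (a + (b+1) + 1)) / ((a:ℝ)+1) := by
      field_simp at key ⊢
      linarith
    rw [hX]
    rw [Nat.factorial_succ a, Nat.factorial_succ b]
    push_cast
    field_simp

lemma continuous_shiftedLegendre (m : ℕ) : Continuous (shiftedLegendre m) := by
  unfold shiftedLegendre
  apply continuous_finset_sum
  intro k _
  fun_prop

lemma integral_shiftedLegendre_eq_zero (m : ℕ) (hm : m ≠ 0) :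
    ∫ u in (0:ℝ)..1, shiftedLegendre m u = 0 := by
  unfold shiftedLegendre
  rw [intervalIntegral.integral_finset_sum]
  · have hterm : ∀ k ∈ Finset.range (m+1),
        (∫ x in (0:ℝ)..1, (-1:ℝ)^k * (Nat.choose m k : ℝ)^2 * x ^ (m-k) * (1-x)^k)
          = (-1:ℝ)^k * (Nat.choose m k : ℝ) * (Nat.factorial m : ℝ) / Nat.factorial (m+1) := by
      intro k hk
      have hkm : k ≤ m := Nat.lt_succ_iff.mp (Finset.mem_range.mp hk)
      have e : (∫ x in (0:ℝ)..1, (-1:ℝ)^k * (Nat.choose m k : ℝ)^2 * x ^ (m-k) * (1-x)^k)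
          = (-1:ℝ)^k * (Nat.choose m k : ℝ)^2 * ∫ x in (0:ℝ)..1, x ^ (m-k) * (1-x)^k := by
        rw [← intervalIntegral.integral_const_mul]
        apply intervalIntegral.integral_congr
        intro x _
        ring
      rw [e, beta_nat k (m-k)]
      rw [show m - k + k + 1 = m + 1 by omega]
      have hfacs := Nat.choose_mul_factorial_mul_factorial hkm
      have hfacsR : (Nat.choose m k : ℝ) * Nat.factorial k * Nat.factorial (m-k)
          = Nat.factorial m := by exact_mod_cast congrArg (Nat.cast : ℕ → ℝ) hfacs
      have h1 : (Nat.factorial (m+1) : ℝ) ≠ 0 := by exact_mod_cast Nat.factorial_ne_zero _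
      calc (-1:ℝ)^k * (Nat.choose m k : ℝ)^2
            * ((Nat.factorial (m-k) : ℝ) * Nat.factorial k / Nat.factorial (m+1))
          = ((-1:ℝ)^k * (Nat.choose m k : ℝ) / Nat.factorial (m+1))
            * ((Nat.choose m k : ℝ) * Nat.factorial k * Nat.factorial (m-k)) := by ring
        _ = ((-1:ℝ)^k * (Nat.choose m k : ℝ) / Nat.factorial (m+1)) * Nat.factorial m := by
            rw [hfacsR]
        _ = (-1:ℝ)^k * (Nat.choose m k : ℝ) * (Nat.factorial m : ℝ) / Nat.factorial (m+1) := by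
            ring
    rw [Finset.sum_congr rfl hterm]
    have : ∑ k ∈ Finset.range (m+1),
        (-1:ℝ)^k * (Nat.choose m k : ℝ) * (Nat.factorial m : ℝ) / Nat.factorial (m+1)
        = (∑ k ∈ Finset.range (m+1), (-1:ℝ)^k * (Nat.choose m k : ℝ))
          * ((Nat.factorial m : ℝ) / Nat.factorial (m+1)) := by
      rw [Finset.sum_mul]
      apply Finset.sum_congr rfl
      intro k _
      ring
    rw [this]
    have hz := Int.alternating_sum_range_choose_of_ne hm
    have hzR : (∑ k ∈ Finset.range (m+1), (-1:ℝ)^k * (Nat.choose m k : ℝ)) = 0 := by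
      exact_mod_cast congrArg (Int.cast : ℤ → ℝ) hz
    rw [hzR, zero_mul]
  · intro k _
    apply Continuous.intervalIntegrable
    fun_prop

open ProbabilityTheory

lemma cdf_genInv_gc (μ : Measure ℝ) [IsProbabilityMeasure μ] {t : ℝ}
    (ht : t ∈ Ioo (0:ℝ) 1) (x : ℝ) :
    genInv (cdf μ) t ≤ x ↔ t ≤ cdf μ x := by
  set S := {y : ℝ | t ≤ cdf μ y} with hS
  have hne : S.Nonempty := by
    have h := (tendsto_cdf_atTop μ).eventually_const_le ht.2
    exact h.exists
  have hbdd : BddBelow S := by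
    have h := (tendsto_cdf_atBot μ).eventually_lt_const ht.1
    obtain ⟨y0, hy0⟩ := h.exists
    refine ⟨y0, fun z hz => ?_⟩
    by_contra hzy
    push_neg at hzy
    exact absurd hz (not_le.mpr (lt_of_le_of_lt ((cdf μ).mono hzy.le) hy0))
  have hQt : t ≤ cdf μ (sInf S) := by
    have hev : ∀ᶠ y in nhdsWithin (sInf S) (Ioi (sInf S)), t ≤ cdf μ y := by
      refine eventually_nhdsWithin_of_forall fun y hy => ?_
      obtain ⟨z, hzS, hzy⟩ := (csInf_lt_iff hbdd hne).mp hy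
      exact le_trans hzS ((cdf μ).mono hzy.le)
    have hct : Filter.Tendsto (cdf μ) (nhdsWithin (sInf S) (Ioi (sInf S)))
        (nhds (cdf μ (sInf S))) :=
      ((cdf μ).right_continuous (sInf S)).mono Ioi_subset_Ici_self
    exact ge_of_tendsto hct hev
  constructor
  · intro h
    exact hQt.trans ((cdf μ).mono h)
  · intro h
    exact csInf_le hbdd h

lemma genInv_monotoneOn (μ : Measure ℝ) [IsProbabilityMeasure μ] :
    MonotoneOn (genInv (cdf μ)) (Ioo (0:ℝ) 1) := fun u hu v hv huv => by
  rw [cdf_genInv_gc μ hu]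
  exact huv.trans ((cdf_genInv_gc μ hv _).mp le_rfl)

lemma map_genInv (μ : Measure ℝ) [IsProbabilityMeasure μ] :
    (volume.restrict (Ioo (0:ℝ) 1)).map (genInv (cdf μ)) = μ := by
  have hQm : AEMeasurable (genInv (cdf μ)) (volume.restrict (Ioo (0:ℝ) 1)) :=
    aemeasurable_restrict_of_monotoneOn measurableSet_Ioo (genInv_monotoneOn μ)
  have hprob : IsProbabilityMeasure (volume.restrict (Ioo (0:ℝ) 1)) :=
    ⟨by simp [Real.volume_Ioo]⟩
  haveI := hprob
  haveI : IsProbabilityMeasure ((volume.restrict (Ioo (0:ℝ) 1)).map (genInv (cdf μ))) :=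
    Measure.isProbabilityMeasure_map hQm
  apply MeasureTheory.Measure.ext_of_Iic
  intro x
  rw [Measure.map_apply_of_aemeasurable hQm measurableSet_Iic,
    Measure.restrict_apply' measurableSet_Ioo]
  have hset : genInv (cdf μ) ⁻¹' Iic x ∩ Ioo 0 1 = Iic (cdf μ x) ∩ Ioo 0 1 := by
    ext t
    simp only [mem_inter_iff, mem_preimage, mem_Iic]
    constructor
    · rintro ⟨h1, h2⟩; exact ⟨(cdf_genInv_gc μ h2 x).mp h1, h2⟩
    · rintro ⟨h1, h2⟩; exact ⟨(cdf_genInv_gc μ h2 x).mpr h1, h2⟩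
  rw [hset]
  rcases le_or_gt 1 (cdf μ x) with h | h
  · have heq : Iic (cdf μ x) ∩ Ioo (0:ℝ) 1 = Ioo 0 1 :=
      inter_eq_self_of_subset_right (fun t htt => le_trans htt.2.le h)
    have hc1 : cdf μ x = 1 := le_antisymm (cdf_le_one μ x) h
    rw [heq, ← ofReal_cdf μ x, hc1, Real.volume_Ioo]
    norm_num
  · have heq : Iic (cdf μ x) ∩ Ioo (0:ℝ) 1 = Ioc 0 (cdf μ x) := by
      ext t
      simp only [mem_inter_iff, mem_Iic, mem_Ioo, mem_Ioc]
      constructor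
      · rintro ⟨h1, h2, h3⟩; exact ⟨h2, h1⟩
      · rintro ⟨h1, h2⟩; exact ⟨h2, h1, lt_of_le_of_lt h2 h⟩
    rw [heq, Real.volume_Ioc, ← ofReal_cdf μ x]
    simp

lemma integrable_genInv (μ : Measure ℝ) [IsProbabilityMeasure μ]
    (hmom : Integrable (fun x : ℝ => |x|) μ) :
    Integrable (genInv (cdf μ)) (volume.restrict (Ioo (0:ℝ) 1)) := by
  have hQm : AEMeasurable (genInv (cdf μ)) (volume.restrict (Ioo (0:ℝ) 1)) :=
    aemeasurable_restrict_of_monotoneOn measurableSet_Ioo (genInv_monotoneOn μ)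
  have h1 : Integrable (fun x : ℝ => |x|)
      ((volume.restrict (Ioo (0:ℝ) 1)).map (genInv (cdf μ))) := by
    rw [map_genInv μ]; exact hmom
  rw [integrable_map_measure continuous_abs.aestronglyMeasurable hQm] at h1
  exact (integrable_norm_iff hQm.aestronglyMeasurable).mp (by simpa [Real.norm_eq_abs, Function.comp_def] using h1)

theorem aux_main (r : ℕ) (hr : 2 ≤ r) (μ : Measure ℝ) [IsProbabilityMeasure μ]
    (hmom : Integrable (fun x : ℝ => |x|) μ)
    (ν : Measure ℝ) [SigmaFinite ν]
    (hνsupp : ν (Ioo (0:ℝ) 1)ᶜ = 0)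
    (hν : ∀ a b : ℝ, 0 < a → a ≤ b → b < 1 →
      ν (Ico a b) = ENNReal.ofReal (genInv (⇑(cdf μ)) b - genInv (⇑(cdf μ)) a)) :
    ∫ t in Ioo (0:ℝ) 1, genInv (⇑(cdf μ)) t * shiftedLegendre (r - 1) t
      = -∫ t, intShiftedLegendre r t ∂ν := by
  set Q : ℝ → ℝ := genInv (⇑(cdf μ)) with hQdef
  set L : ℝ → ℝ := shiftedLegendre (r - 1) with hLdef
  set K : ℝ → ℝ := intShiftedLegendre r with hKdef
  set c : ℝ := (1/2 : ℝ) with hcdef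
  have hcI : c ∈ Ioo (0:ℝ) 1 := by norm_num [hcdef]
  have hm : r - 1 ≠ 0 := by omega
  have hK1 : K 1 = 0 := by
    rw [hKdef]
    show (∫ u in (0:ℝ)..1, shiftedLegendre (r-1) u) = 0
    exact integral_shiftedLegendre_eq_zero (r-1) hm
  have hKs : ∀ s : ℝ, K s = ∫ u in (0:ℝ)..s, L u := fun s => rfl
  have hLc : Continuous L := continuous_shiftedLegendre _
  obtain ⟨B, hB⟩ : ∃ B, ∀ x ∈ Icc (0:ℝ) 1, ‖L x‖ ≤ B :=
    isCompact_Icc.exists_bound_of_continuousOn hLc.continuousOn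
  have hB0 : 0 ≤ B := le_trans (norm_nonneg _) (hB 0 ⟨le_rfl, zero_le_one⟩)
  have hQmono : MonotoneOn Q (Ioo (0:ℝ) 1) := genInv_monotoneOn μ
  have hQm : AEMeasurable Q (volume.restrict (Ioo (0:ℝ) 1)) :=
    aemeasurable_restrict_of_monotoneOn measurableSet_Ioo hQmono
  have hQint : Integrable Q (volume.restrict (Ioo (0:ℝ) 1)) := integrable_genInv μ hmom
  set g : ℝ → ℝ → ℝ :=
    fun t s => L t * ((Ico c t).indicator 1 s - (Ico t c).indicator 1 s) with hgdef
  -- measurability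
  have hgm : Measurable (Function.uncurry g) := by
    have huncur : Function.uncurry g = fun p : ℝ × ℝ =>
        L p.1 * ({q : ℝ × ℝ | c ≤ q.2 ∧ q.2 < q.1}.indicator 1 p
          - {q : ℝ × ℝ | q.1 ≤ q.2 ∧ q.2 < c}.indicator 1 p) := by
      funext p
      simp only [Function.uncurry, hgdef, Set.indicator_apply, mem_Ico, mem_setOf_eq,
        Pi.one_apply]
    rw [huncur]
    apply Measurable.mul
    · exact hLc.measurable.comp measurable_fst
    · apply Measurable.sub
      · apply Measurable.indicator measurable_const
        exact (measurableSet_le measurable_const measurable_snd).inter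
          (measurableSet_lt measurable_snd measurable_fst)
      · apply Measurable.indicator measurable_const
        exact (measurableSet_le measurable_fst measurable_snd).inter
          (measurableSet_lt measurable_snd measurable_const)
  have hindInt : ∀ (A : Set ℝ), MeasurableSet A → ν A < ⊤ → ∀ e : ℝ,
      Integrable (fun s => A.indicator (fun _ => e) s) ν := by
    intro A hA hfin e
    rw [integrable_indicator_iff hA]
    exact integrableOn_const hfin.ne
  -- inner integral in s
  have hinner_s : ∀ t ∈ Ioo (0:ℝ) 1, ∫ s, g t s ∂ν = L t * (Q t - Q c) := by
    intro t ht
    rcases le_or_gt c t with hct | htc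
    · have hempty : Ico t c = (∅ : Set ℝ) := Ico_eq_empty (not_lt.mpr hct)
      have hfun : (fun s => g t s) = fun s => (Ico c t).indicator (fun _ => L t) s := by
        funext s
        by_cases hsm : s ∈ Ico c t <;> simp [hgdef, hempty, hsm]
      rw [hfun, integral_indicator_const (L t) measurableSet_Ico, measureReal_def,
        hν c t (by norm_num [hcdef]) hct ht.2,
        ENNReal.toReal_ofReal (sub_nonneg.mpr (hQmono hcI ht hct)), smul_eq_mul]
      ring
    · have hempty : Ico c t = (∅ : Set ℝ) := Ico_eq_empty (not_lt.mpr htc.le)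
      have hfun : (fun s => g t s) = fun s => (Ico t c).indicator (fun _ => -L t) s := by
        funext s
        by_cases hsm : s ∈ Ico t c <;> simp [hgdef, hempty, hsm]
      rw [hfun, integral_indicator_const (-L t) measurableSet_Ico, measureReal_def,
        hν t c ht.1 htc.le hcI.2,
        ENNReal.toReal_ofReal (sub_nonneg.mpr (hQmono ht hcI htc.le)), smul_eq_mul]
      ring
  -- inner integral in t
  have hinner_t : ∀ s ∈ Ioo (0:ℝ) 1, (∫ t in Ioo (0:ℝ) 1, g t s) = -K s := by
    intro s hs
    rcases le_or_gt c s with hcs | hsc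
    · have hg : (fun t => g t s) = fun t => (Ioi s).indicator L t := by
        funext t
        simp only [hgdef, Set.indicator_apply, mem_Ico, mem_Ioi, Pi.one_apply]
        by_cases h : s < t <;> simp [h, hcs, not_lt.mpr hcs]
      simp_rw [hg]
      rw [integral_indicator measurableSet_Ioi,
        Measure.restrict_restrict measurableSet_Ioi]
      have hset : Ioi s ∩ Ioo (0:ℝ) 1 = Ioo s 1 := by
        ext u
        simp only [mem_inter_iff, mem_Ioi, mem_Ioo]
        exact ⟨fun ⟨h1, _, h3⟩ => ⟨h1, h3⟩, fun ⟨h1, h2⟩ => ⟨h1, hs.1.trans h1, h2⟩⟩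
      rw [hset, ← integral_Ioc_eq_integral_Ioo,
        ← intervalIntegral.integral_of_le hs.2.le]
      have hsub : ∫ t in s..(1:ℝ), L t = K 1 - K s := by
        rw [hKs 1, hKs s,
          intervalIntegral.integral_interval_sub_left (hLc.intervalIntegrable 0 1)
            (hLc.intervalIntegrable 0 s)]
      rw [hsub, hK1]
      ring
    · have hg : (fun t => g t s) = fun t => -(Iic s).indicator L t := by
        funext t
        simp only [hgdef, Set.indicator_apply, mem_Ico, mem_Iic, Pi.one_apply]
        by_cases h : t ≤ s <;> simp [h, hsc, not_le.mpr hsc]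
      simp_rw [hg]
      rw [integral_neg, integral_indicator measurableSet_Iic,
        Measure.restrict_restrict measurableSet_Iic]
      have hset : Iic s ∩ Ioo (0:ℝ) 1 = Ioc 0 s := by
        ext u
        simp only [mem_inter_iff, mem_Iic, mem_Ioo, mem_Ioc]
        exact ⟨fun ⟨h1, h2, _⟩ => ⟨h2, h1⟩,
          fun ⟨h1, h2⟩ => ⟨h2, h1, lt_of_le_of_lt h2 hs.2⟩⟩
      rw [hset, ← intervalIntegral.integral_of_le hs.1.le, ← hKs s]
  -- integrability on the product
  have hprod : Integrable (Function.uncurry g)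
      ((volume.restrict (Ioo (0:ℝ) 1)).prod ν) := by
    rw [integrable_prod_iff hgm.aestronglyMeasurable]
    simp only [Function.uncurry_apply_pair]
    constructor
    · filter_upwards [ae_restrict_mem measurableSet_Ioo] with t ht
      rcases le_or_gt c t with hct | htc
      · have hempty : Ico t c = (∅ : Set ℝ) := Ico_eq_empty (not_lt.mpr hct)
        have hfun : (fun s => g t s) = fun s => (Ico c t).indicator (fun _ => L t) s := by
          funext s
          by_cases hsm : s ∈ Ico c t <;> simp [hgdef, hempty, hsm]
        rw [hfun]
        exact hindInt _ measurableSet_Ico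
          (by rw [hν c t (by norm_num [hcdef]) hct ht.2]; exact ENNReal.ofReal_lt_top) _
      · have hempty : Ico c t = (∅ : Set ℝ) := Ico_eq_empty (not_lt.mpr htc.le)
        have hfun : (fun s => g t s) = fun s => (Ico t c).indicator (fun _ => -L t) s := by
          funext s
          by_cases hsm : s ∈ Ico t c <;> simp [hgdef, hempty, hsm]
        rw [hfun]
        exact hindInt _ measurableSet_Ico
          (by rw [hν t c ht.1 htc.le hcI.2]; exact ENNReal.ofReal_lt_top) _
    · have heq : ∀ᵐ t ∂(volume.restrict (Ioo (0:ℝ) 1)),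
          ‖L t‖ * ‖Q t - Q c‖ = ∫ s, ‖g t s‖ ∂ν := by
        filter_upwards [ae_restrict_mem measurableSet_Ioo] with t ht
        rcases le_or_gt c t with hct | htc
        · have hempty : Ico t c = (∅ : Set ℝ) := Ico_eq_empty (not_lt.mpr hct)
          have hfun : (fun s => ‖g t s‖)
              = fun s => (Ico c t).indicator (fun _ => ‖L t‖) s := by
            funext s
            by_cases hsm : s ∈ Ico c t <;> simp [hgdef, hempty, hsm]
          rw [hfun, integral_indicator_const (‖L t‖) measurableSet_Ico, measureReal_def,
            hν c t (by norm_num [hcdef]) hct ht.2,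
            ENNReal.toReal_ofReal (sub_nonneg.mpr (hQmono hcI ht hct)), smul_eq_mul,
            Real.norm_eq_abs (Q t - Q c),
            abs_of_nonneg (sub_nonneg.mpr (hQmono hcI ht hct))]
          ring
        · have hempty : Ico c t = (∅ : Set ℝ) := Ico_eq_empty (not_lt.mpr htc.le)
          have hfun : (fun s => ‖g t s‖)
              = fun s => (Ico t c).indicator (fun _ => ‖L t‖) s := by
            funext s
            by_cases hsm : s ∈ Ico t c <;> simp [hgdef, hempty, hsm]
          rw [hfun, integral_indicator_const (‖L t‖) measurableSet_Ico, measureReal_def,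
            hν t c ht.1 htc.le hcI.2,
            ENNReal.toReal_ofReal (sub_nonneg.mpr (hQmono ht hcI htc.le)), smul_eq_mul,
            Real.norm_eq_abs (Q t - Q c),
            abs_of_nonpos (sub_nonpos.mpr (hQmono ht hcI htc.le))]
          ring
      apply Integrable.congr ?_ heq
      have hbnd : Integrable (fun t => B * (‖Q t‖ + ‖Q c‖))
          (volume.restrict (Ioo (0:ℝ) 1)) :=
        (hQint.norm.add (integrable_const _)).const_mul B
      apply Integrable.mono' hbnd
      · exact ((hLc.measurable.norm.aemeasurable).mul
          ((hQm.sub aemeasurable_const).norm)).aestronglyMeasurable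
      · filter_upwards [ae_restrict_mem measurableSet_Ioo] with t ht
        have h1 : ‖L t‖ ≤ B := hB t ⟨ht.1.le, ht.2.le⟩
        have h2 : ‖Q t - Q c‖ ≤ ‖Q t‖ + ‖Q c‖ := norm_sub_le _ _
        calc ‖‖L t‖ * ‖Q t - Q c‖‖ = ‖L t‖ * ‖Q t - Q c‖ := by
              rw [norm_mul, norm_norm, norm_norm]
          _ ≤ B * (‖Q t‖ + ‖Q c‖) :=
              mul_le_mul h1 h2 (norm_nonneg _) hB0
  -- integrability of the pieces on (0,1)
  have hLint : Integrable L (volume.restrict (Ioo (0:ℝ) 1)) := by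
    apply Integrable.mono' (integrable_const B) hLc.aestronglyMeasurable.restrict
    filter_upwards [ae_restrict_mem measurableSet_Ioo] with t ht
    exact hB t ⟨ht.1.le, ht.2.le⟩
  have int1 : Integrable (fun t => (Q t - Q c) * L t) (volume.restrict (Ioo (0:ℝ) 1)) := by
    have hbnd : Integrable (fun t => (‖Q t‖ + ‖Q c‖) * B)
        (volume.restrict (Ioo (0:ℝ) 1)) :=
      (hQint.norm.add (integrable_const _)).mul_const B
    apply Integrable.mono' hbnd
    · exact ((hQm.sub aemeasurable_const).mul
        hLc.measurable.aemeasurable).aestronglyMeasurable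
    · filter_upwards [ae_restrict_mem measurableSet_Ioo] with t ht
      calc ‖(Q t - Q c) * L t‖ = ‖Q t - Q c‖ * ‖L t‖ := norm_mul _ _
        _ ≤ (‖Q t‖ + ‖Q c‖) * B :=
            mul_le_mul (norm_sub_le _ _) (hB t ⟨ht.1.le, ht.2.le⟩) (norm_nonneg _)
              (by positivity)
  have int2 : Integrable (fun t => Q c * L t) (volume.restrict (Ioo (0:ℝ) 1)) :=
    hLint.const_mul _
  have int2val : ∫ t in Ioo (0:ℝ) 1, Q c * L t = 0 := by
    rw [integral_const_mul, ← integral_Ioc_eq_integral_Ioo,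
      ← intervalIntegral.integral_of_le zero_le_one]
    rw [hLdef, integral_shiftedLegendre_eq_zero (r-1) hm, mul_zero]
  have hae : ∀ᵐ s ∂ν, s ∈ Ioo (0:ℝ) 1 := by
    refine ae_iff.mpr ?_
    simpa [Set.compl_def] using hνsupp
  -- final computation
  calc ∫ t in Ioo (0:ℝ) 1, Q t * L t
      = ∫ t in Ioo (0:ℝ) 1, ((Q t - Q c) * L t + Q c * L t) := by
        apply integral_congr_ae
        filter_upwards with t
        ring
    _ = (∫ t in Ioo (0:ℝ) 1, (Q t - Q c) * L t) + ∫ t in Ioo (0:ℝ) 1, Q c * L t :=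
        integral_add int1 int2
    _ = ∫ t in Ioo (0:ℝ) 1, (Q t - Q c) * L t := by rw [int2val, add_zero]
    _ = ∫ t in Ioo (0:ℝ) 1, ∫ s, g t s ∂ν := by
        apply integral_congr_ae
        filter_upwards [ae_restrict_mem measurableSet_Ioo] with t ht
        rw [hinner_s t ht]
        ring
    _ = ∫ s, (∫ t in Ioo (0:ℝ) 1, g t s) ∂ν := integral_integral_swap hprod
    _ = ∫ s, -K s ∂ν := by
        apply integral_congr_ae
        filter_upwards [hae] with s hs
        exact hinner_t s hs
    _ = -∫ s, K s ∂ν := integral_neg _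

/-- For `r ≥ 2` and a cdf `F` with finite first absolute moment,
`λ_r = ∫_0^1 F⁻¹(t) dK_r(t) = -∫_0^1 K_r(t) dF⁻¹(t)`, where `dF⁻¹` is the Stieltjes
measure `ν` on `(0,1)` induced by the non-decreasing function `F⁻¹`
(so that `ν [a,b) = F⁻¹(b) - F⁻¹(a)` for `0 < a ≤ b < 1`), and
`∫_0^1 F⁻¹ dK_r = ∫_0^1 F⁻¹(t) L_{r-1}(t) dt` since `K_r' = L_{r-1}`. -/
theorem lmoment_eq_neg_integral_K_quantileMeasure
    (r : ℕ) (hr : 2 ≤ r) (μ : Measure ℝ) [IsProbabilityMeasure μ]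
    (hmom : Integrable (fun x : ℝ => |x|) μ)
    (F : ℝ → ℝ) (hF : ∀ x, F x = (μ (Iic x)).toReal)
    (ν : Measure ℝ) [SigmaFinite ν]
    (hνsupp : ν (Ioo (0:ℝ) 1)ᶜ = 0)
    (hν : ∀ a b : ℝ, 0 < a → a ≤ b → b < 1 →
      ν (Ico a b) = ENNReal.ofReal (genInv F b - genInv F a)) :
    ∫ t in Ioo (0:ℝ) 1, genInv F t * shiftedLegendre (r - 1) t
      = -∫ t, intShiftedLegendre r t ∂ν := by
  have hFc : F = ⇑(cdf μ) := funext fun x => (hF x).trans (cdf_eq_real μ x).symm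
  subst hFc
  exact aux_main r hr μ hmom ν hνsupp hν
end

section
/- Let φ : ℝ → [0,+∞] be strictly convex with φ(1) = 0. For σ-finite measures F, G on ℝ with G ≪ F, the divergence D_φ(G,F) := ∫ φ(dG/dF) dF satisfies D_φ(G,F) = 0 if and only if G = F. -/
open MeasureTheory Set

/-- For a strictly convex `φ : ℝ → [0,∞]` with `φ(1) = 0` and domain an open interval
`(a_φ, b_φ) ∋ 1`, and σ-finite measures `G ≪ F` on `ℝ`, the divergence
`D_φ(G,F) = ∫ φ(dG/dF) dF` vanishes iff `G = F`. -/
theorem divergence_eq_zero_iff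
    (φ : ℝ → ENNReal) (aφ bφ : ℝ) (ha : aφ < 1) (hb : 1 < bφ)
    (hdom : ∀ x : ℝ, φ x < ⊤ ↔ x ∈ Ioo aφ bφ)
    (hconv : ∀ x ∈ Ioo aφ bφ, ∀ y ∈ Ioo aφ bφ, x ≠ y → ∀ t : ℝ, t ∈ Ioo (0:ℝ) 1 →
      φ (t * x + (1 - t) * y) < ENNReal.ofReal t * φ x + ENNReal.ofReal (1 - t) * φ y)
    (hφ1 : φ 1 = 0)
    (F G : Measure ℝ) [SigmaFinite F] [SigmaFinite G]
    (hac : G ≪ F) :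
    (∫⁻ x, φ ((G.rnDeriv F x).toReal) ∂F) = 0 ↔ G = F := by
  have h1dom : (1:ℝ) ∈ Ioo aφ bφ := ⟨ha, hb⟩
  -- φ vanishes only at 1
  have hpos : ∀ x : ℝ, x ≠ 1 → 0 < φ x := by
    intro x hx
    rcases eq_or_ne (φ x) 0 with h0 | h0
    · exfalso
      have hxdom : x ∈ Ioo aφ bφ := (hdom x).mp (by simp [h0])
      have := hconv x hxdom 1 h1dom hx (1/2) (by norm_num)
      rw [h0, hφ1] at this
      simp at this
    · exact pos_iff_ne_zero.mpr h0
  -- lower bound for φ away from 1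
  have hlb : ∀ ε : ℝ, 0 < ε → 1 + ε < bφ → aφ < 1 - ε →
      ∀ y : ℝ, ε ≤ |y - 1| → min (φ (1+ε)) (φ (1-ε)) ≤ φ y := by
    intro ε hε hεb hεa y hy
    by_cases hydom : y ∈ Ioo aφ bφ
    · rcases le_abs.mp hy with h | h
      · -- y ≥ 1 + ε
        have hy1 : 1 + ε ≤ y := by linarith
        rcases eq_or_lt_of_le hy1 with heq | hlt
        · rw [heq]; exact min_le_left _ _
        · have hyne : y ≠ 1 := by intro h'; rw [h'] at hlt; linarith
          set t : ℝ := ε / (y - 1) with ht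
          have hy1' : (0:ℝ) < y - 1 := by linarith
          have ht0 : 0 < t := div_pos hε hy1'
          have ht1 : t < 1 := (div_lt_one hy1').mpr (by linarith)
          have hcomb : t * y + (1 - t) * 1 = 1 + ε := by
            rw [ht]
            linear_combination div_mul_cancel₀ ε hy1'.ne'
          have := hconv y hydom 1 h1dom hyne t ⟨ht0, ht1⟩
          rw [hcomb, hφ1, mul_zero, add_zero] at this
          calc min (φ (1+ε)) (φ (1-ε)) ≤ φ (1+ε) := min_le_left _ _
            _ ≤ ENNReal.ofReal t * φ y := this.le
            _ ≤ 1 * φ y := by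
                gcongr
                exact ENNReal.ofReal_le_one.mpr ht1.le
            _ = φ y := one_mul _
      · -- y ≤ 1 - ε
        have hy1 : y ≤ 1 - ε := by linarith
        rcases eq_or_lt_of_le hy1 with heq | hlt
        · rw [heq]; exact min_le_right _ _
        · have hyne : y ≠ 1 := by intro h'; rw [h'] at hlt; linarith
          set t : ℝ := ε / (1 - y) with ht
          have hy1' : (0:ℝ) < 1 - y := by linarith
          have ht0 : 0 < t := div_pos hε hy1'
          have ht1 : t < 1 := (div_lt_one hy1').mpr (by linarith)
          have hcomb : t * y + (1 - t) * 1 = 1 - ε := by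
            rw [ht]
            linear_combination -(div_mul_cancel₀ ε hy1'.ne')
          have := hconv y hydom 1 h1dom hyne t ⟨ht0, ht1⟩
          rw [hcomb, hφ1, mul_zero, add_zero] at this
          calc min (φ (1+ε)) (φ (1-ε)) ≤ φ (1-ε) := min_le_right _ _
            _ ≤ ENNReal.ofReal t * φ y := this.le
            _ ≤ 1 * φ y := by
                gcongr
                exact ENNReal.ofReal_le_one.mpr ht1.le
            _ = φ y := one_mul _
    · have : φ y = ⊤ := by
        by_contra h
        exact hydom ((hdom y).mp (lt_top_iff_ne_top.mpr h))
      rw [this]; exact le_top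
  constructor
  · intro hzero
    -- measurable density in ℝ
    have hmeas : Measurable fun x => (G.rnDeriv F x).toReal :=
      (Measure.measurable_rnDeriv G F).ennreal_toReal
    set g : ℝ → ℝ := fun x => (G.rnDeriv F x).toReal with hg
    -- choose a base epsilon
    set ε₀ : ℝ := min (1 - aφ) (bφ - 1) / 2 with hε₀
    have hε₀pos : 0 < ε₀ := by
      have : 0 < min (1 - aφ) (bφ - 1) := lt_min (by linarith) (by linarith)
      positivity
    have hε₀b : 1 + ε₀ < bφ := by
      have : ε₀ ≤ (bφ - 1) / 2 := by
        rw [hε₀]; gcongr; exact min_le_right _ _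
      linarith
    have hε₀a : aφ < 1 - ε₀ := by
      have : ε₀ ≤ (1 - aφ) / 2 := by
        rw [hε₀]; gcongr; exact min_le_left _ _
      linarith
    -- each set S n is null
    have hSnull : ∀ n : ℕ, F {x | ε₀ / (n+1) ≤ |g x - 1|} = 0 := by
      intro n
      set ε : ℝ := ε₀ / (n+1) with hεdef
      have hεpos : 0 < ε := by positivity
      have hεle : ε ≤ ε₀ := by
        rw [hεdef]
        apply div_le_self hε₀pos.le
        exact_mod_cast Nat.one_le_iff_ne_zero.mpr (Nat.succ_ne_zero n)
      have hεb : 1 + ε < bφ := by linarith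
      have hεa : aφ < 1 - ε := by linarith
      set c : ENNReal := min (φ (1+ε)) (φ (1-ε)) with hc
      have hcpos : 0 < c :=
        lt_min (hpos _ (by intro h; nlinarith [hεpos])) (hpos _ (by intro h; nlinarith [hεpos]))
      set S : Set ℝ := {x | ε ≤ |g x - 1|} with hS
      have hSmeas : MeasurableSet S := by
        have : S = g ⁻¹' {y | ε ≤ |y - 1|} := rfl
        rw [this]
        exact hmeas (measurableSet_le measurable_const (by fun_prop))
      have hbound : c * F S ≤ ∫⁻ x, φ (g x) ∂F := by
        rw [← lintegral_indicator_const hSmeas]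
        apply lintegral_mono
        intro x
        by_cases hx : x ∈ S
        · rw [indicator_of_mem hx]
          exact hlb ε hεpos hεb hεa (g x) hx
        · rw [indicator_of_notMem hx]; exact zero_le
      rw [hzero] at hbound
      have := le_antisymm hbound zero_le
      rcases mul_eq_zero.mp this with h | h
      · exact absurd h hcpos.ne'
      · exact h
    -- g = 1 a.e.
    have hgae : ∀ᵐ x ∂F, g x = 1 := by
      have hsub : {x | g x ≠ 1} ⊆ ⋃ n : ℕ, {x | ε₀ / (n+1) ≤ |g x - 1|} := by
        intro x hx
        have habs : 0 < |g x - 1| := abs_pos.mpr (sub_ne_zero.mpr hx)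
        obtain ⟨n, hn⟩ := exists_nat_gt (ε₀ / |g x - 1|)
        refine mem_iUnion.mpr ⟨n, ?_⟩
        have hn1 : ε₀ / |g x - 1| < n + 1 := by
          calc ε₀ / |g x - 1| < n := hn
            _ ≤ n + 1 := by linarith
        have : ε₀ < (n + 1) * |g x - 1| := by
          rwa [div_lt_iff₀ habs] at hn1
        show ε₀ / (n+1) ≤ |g x - 1|
        rw [div_le_iff₀ (by positivity)]
        linarith [this]
      have : F {x | g x ≠ 1} = 0 :=
        measure_mono_null hsub (by
          rw [measure_iUnion_null_iff]
          exact hSnull)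
      exact this
    -- rnDeriv = 1 a.e.
    have hrnae : G.rnDeriv F =ᵐ[F] 1 := by
      filter_upwards [hgae, G.rnDeriv_lt_top F] with x hx hlt
      have : (G.rnDeriv F x).toReal = (1 : ENNReal).toReal := by simpa using hx
      exact (ENNReal.toReal_eq_toReal_iff' hlt.ne ENNReal.one_ne_top).mp this
    calc G = F.withDensity (G.rnDeriv F) := (Measure.withDensity_rnDeriv_eq G F hac).symm
      _ = F.withDensity 1 := withDensity_congr_ae hrnae
      _ = F := withDensity_one
  · intro hGF
    subst hGF
    have : ∀ᵐ x ∂G, φ ((G.rnDeriv G x).toReal) = 0 := by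
      filter_upwards [G.rnDeriv_self] with x hx
      rw [hx]; simpa using hφ1
    rw [lintegral_congr_ae this, lintegral_zero]
end
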